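/- arXiv:1209.3253 — 13 statements merged into one kernel-verified Lean document; each statement's English description precedes it below -/
import Mathlib

section
/- Let R ≥ 1 and let M : Fin R → ℕ be positive sizes, and let N, d and p : Fin R → ℕ be positive. Let X : (Π_r Fin(M r)) → Fin N → ℂ be an (R+1)-way tensor, regarded as the matrix X̄ ∈ ℂ^{(∏_r M_r) × N} with rows indexed by m ∈ Π_r Fin(M r) and columns by n ∈ Fin N. For each r let Û_r ∈ ℂ^{M_r × p_r} be a matrix, let Û_{R+1} ∈ ℂ^{N × d}, let Σ̂ ∈ ℂ^{d×d} be invertible, and let Û_s ∈ ℂ^{(∏_r M_r) × d} satisfy X̄ · conj(Û_{R+1}) = Û_s · Σ̂ (conjugation entrywise). Set T̂_r := Û_r · Û_rᴴ ∈ ℂ^{M_r × M_r} and let K ∈ ℂ^{(∏_r M_r) × (∏_r M_r)} be the Kronecker product T̂₁ ⊗ ⋯ ⊗ T̂_R, i.e. K_{m,m'} = ∏_r (T̂_r)_{m_r, m'_r}. Define the truncated core tensor Ŝ : (Π_r Fin(p r)) → Fin d → ℂ by Ŝ_{q,l} = Σ_{m,n} (∏_r conj((Û_r)_{m_r, q_r}))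 · conj((Û_{R+1})_{n,l}) · X_{m,n}, and define the (R+1)-mode unfolding of the HOSVD-based signal subspace estimate Y ∈ ℂ^{(∏_r M_r) × d} by Y_{m,k} = Σ_{q,l} Ŝ_{q,l} · (∏_r (Û_r)_{m_r, q_r}) · (Σ̂^{-1})_{l,k}. Then Y = K · Û_s. -/
open Matrix BigOperators

/-- Theorem 1 of the paper: the HOSVD-based subspace estimate
`Y = [Ŝ ×₁ Û₁ ⋯ ×_R Û_R ×_{R+1} Σ̂⁻¹]₍R+1₎ᵀ` is linked to the SVD-based
subspace estimate `Û_s` via the Kronecker product of the estimated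
projection matrices `T̂_r = Û_r Û_rᴴ`. -/
theorem hosvd_subspace_link
    (R : ℕ) (hR : 1 ≤ R) (M : Fin R → ℕ) (hM : ∀ r, 0 < M r)
    (N d : ℕ) (hN : 0 < N) (hd : 0 < d)
    (p : Fin R → ℕ) (hp : ∀ r, 0 < p r)
    (X : (∀ r, Fin (M r)) → Fin N → ℂ)
    (Uhat : ∀ r, Matrix (Fin (M r)) (Fin (p r)) ℂ)
    (UN : Matrix (Fin N) (Fin d) ℂ)
    (Sig : Matrix (Fin d) (Fin d) ℂ) (hSig : IsUnit Sig.det)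
    (Us : Matrix (∀ r, Fin (M r)) (Fin d) ℂ)
    (hX : Matrix.of X * UN.map (starRingEnd ℂ) = Us * Sig)
    (K : Matrix (∀ r, Fin (M r)) (∀ r, Fin (M r)) ℂ)
    (hK : ∀ m m', K m m' = ∏ r, (Uhat r * (Uhat r)ᴴ) (m r) (m' r))
    (S : (∀ r, Fin (p r)) → Fin d → ℂ)
    (hS : ∀ q l, S q l =
      ∑ m : ∀ r, Fin (M r), ∑ n : Fin N,
        (∏ r, (starRingEnd ℂ) (Uhat r (m r) (q r))) * (starRingEnd ℂ) (UN n l) * X m n)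
    (Y : Matrix (∀ r, Fin (M r)) (Fin d) ℂ)
    (hY : ∀ m k, Y m k =
      ∑ q : ∀ r, Fin (p r), ∑ l : Fin d,
        S q l * (∏ r, Uhat r (m r) (q r)) * Sig⁻¹ l k) :
    Y = K * Us := by
  have hUs : Us = Matrix.of X * UN.map (starRingEnd ℂ) * Sig⁻¹ := by
    rw [hX, Matrix.mul_nonsing_inv_cancel_right _ _ hSig]
  have hKey : ∀ m m' : (∀ r, Fin (M r)), K m m' =
      ∑ q : ∀ r, Fin (p r), ∏ r, Uhat r (m r) (q r) * (starRingEnd ℂ) (Uhat r (m' r) (q r)) := by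
    intro m m'
    rw [hK]
    simp only [Matrix.mul_apply, Matrix.conjTranspose_apply, RCLike.star_def]
    rw [Finset.prod_univ_sum]
    simp [Fintype.piFinset_univ]
  ext m k
  rw [hY, hUs]
  simp only [hS, Matrix.mul_apply, hKey, Matrix.of_apply, Matrix.map_apply,
    Finset.sum_mul, Finset.mul_sum]
  conv_lhs => rw [Finset.sum_comm]
  conv_lhs => enter [2, l]; rw [Finset.sum_comm]
  conv_lhs => rw [Finset.sum_comm]
  conv_lhs => enter [2, m', 2, l]; rw [Finset.sum_comm]
  refine Finset.sum_congr rfl fun m' _ => Finset.sum_congr rfl fun l _ =>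
    Finset.sum_congr rfl fun n _ => Finset.sum_congr rfl fun q _ => ?_
  rw [Finset.prod_mul_distrib]
  ring
end

section
/- Let M, p, q ∈ ℕ. Let U_s ∈ ℂ^{M×p} have orthonormal columns (U_sᴴ · U_s = I_p) and let U_n ∈ ℂ^{M×q} satisfy U_nᴴ · U_s = 0. Let Γ_n ∈ ℂ^{q×p} be arbitrary and let Γ_s ∈ ℂ^{p×p} be skew-Hermitian (Γ_sᴴ = −Γ_s). Define ΔU := U_n·Γ_n + U_s·Γ_s, the projection matrix T := U_s·U_sᴴ, and the first-order projector perturbation ΔT := U_s·ΔUᴴ + ΔU·U_sᴴ. Then ΔT · T = U_n · Γ_n · U_sᴴ. -/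
open Matrix

/-- Algebraic core of the proof of Theorem 2 (Appendix B) of the paper:
the first-order perturbation `ΔT` of the projector `T = U_s U_sᴴ` induced by
the perturbation `ΔU = U_n Γ_n + U_s Γ_s` (with `Γ_s` skew-Hermitian),
multiplied by `T`, retains only the noise-subspace leakage term. -/
theorem projector_perturbation_core
    (M p q : ℕ)
    (Us : Matrix (Fin M) (Fin p) ℂ) (hUs : Usᴴ * Us = 1)
    (Un : Matrix (Fin M) (Fin q) ℂ) (hUn : Unᴴ * Us = 0)
    (Γn : Matrix (Fin q) (Fin p) ℂ)
    (Γs : Matrix (Fin p) (Fin p) ℂ) (hΓs : Γsᴴ = -Γs) :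
    let ΔU : Matrix (Fin M) (Fin p) ℂ := Un * Γn + Us * Γs
    let T : Matrix (Fin M) (Fin M) ℂ := Us * Usᴴ
    let ΔT : Matrix (Fin M) (Fin M) ℂ := Us * ΔUᴴ + ΔU * Usᴴ
    ΔT * T = Un * Γn * Usᴴ := by
  intro ΔU T ΔT
  have h1 : ∀ (X : Matrix (Fin M) (Fin M) ℂ), Unᴴ * (Us * (Usᴴ * X)) = 0 := by
    intro X; rw [← Matrix.mul_assoc, hUn, Matrix.zero_mul]
  have h1' : Unᴴ * (Us * Usᴴ) = 0 := by rw [← Matrix.mul_assoc, hUn, Matrix.zero_mul]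
  have h2' : Usᴴ * (Us * Usᴴ) = Usᴴ := by rw [← Matrix.mul_assoc, hUs, Matrix.one_mul]
  have h2 : ∀ (X : Matrix (Fin M) (Fin M) ℂ), Usᴴ * (Us * (Usᴴ * X)) = Usᴴ * X := by
    intro X; rw [← Matrix.mul_assoc, hUs, Matrix.one_mul]
  simp only [ΔU, T, ΔT, conjTranspose_add, conjTranspose_mul, hΓs,
    Matrix.add_mul, Matrix.mul_add, Matrix.mul_assoc, Matrix.neg_mul, Matrix.mul_neg,
    h1, h2, h1', h2', Matrix.mul_zero, add_zero]
  abel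
end

section
/- Let M ∈ ℕ with M ≥ 2 and μ ∈ ℝ. Let a ∈ ℂ^M be the ULA steering vector with entries a_m = exp(i·m·μ) for m = 0,…,M−1, and let J₁, J₂ ∈ ℂ^{(M−1)×M} be the maximum-overlap selection matrices with (J₁)_{k,m} = 1 if m = k and 0 otherwise, and (J₂)_{k,m} = 1 if m = k+1 and 0 otherwise. Define the row vector ãᵀ := (√M/(M−1)) · (J₁·a)ᴴ · (e^{−iμ}·J₂ − J₁) · (I_M − (1/M)·a·aᴴ) ∈ ℂ^{1×M}. Then ã is explicitly given by ã_0 = −√M/(M−1), ã_{M−1} = (√M/(M−1))·e^{−i(M−1)μ}, and ã_m = 0 for 0 < m < M−1; consequently ‖ã‖² = 2M/(M−1)². -/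
open Matrix BigOperators

lemma exp_step (μ : ℝ) (p q : ℕ) (h : q = p + 1) :
    Complex.exp (-(Complex.I * (p : ℂ) * μ)) * Complex.exp (-(Complex.I * (μ:ℂ))) =
    Complex.exp (-(Complex.I * (q : ℂ) * μ)) := by
  rw [← Complex.exp_add]
  congr 1
  have : ((q:ℕ):ℂ) = ((p:ℕ):ℂ) + 1 := by exact_mod_cast congrArg (Nat.cast (R := ℂ)) h
  rw [this]; ring

lemma esprit_y (M : ℕ) (hM : 2 ≤ M) (μ : ℝ)
    (a : Fin M → ℂ)
    (ha : ∀ m, a m = Complex.exp (Complex.I * ((m : ℕ) : ℂ) * (μ : ℂ)))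
    (J1 J2 : Matrix (Fin (M - 1)) (Fin M) ℂ)
    (hJ1 : ∀ k m, J1 k m = if (m : ℕ) = (k : ℕ) then 1 else 0)
    (hJ2 : ∀ k m, J2 k m = if (m : ℕ) = (k : ℕ) + 1 then 1 else 0) :
    ∀ j : Fin M, (star (J1 *ᵥ a) ᵥ* (Complex.exp (-(Complex.I * (μ : ℂ))) • J2 - J1)) j
      = if (j:ℕ) = 0 then -1 else if (j:ℕ) = M - 1
          then Complex.exp (-(Complex.I * ((j:ℕ):ℂ) * μ)) else 0 := by
  have hJ1a : ∀ k : Fin (M-1), (J1 *ᵥ a) k = a ⟨k, by omega⟩ := by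
    intro k
    simp only [mulVec, dotProduct, hJ1]
    rw [Finset.sum_eq_single (⟨(k:ℕ), by omega⟩ : Fin M)]
    · simp
    · intro b _ hb
      have : (b:ℕ) ≠ (k:ℕ) := fun h => hb (Fin.ext h)
      simp [this]
    · simp
  have hconj : ∀ m : Fin M, (starRingEnd ℂ) (a m) = Complex.exp (-(Complex.I * ((m:ℕ):ℂ) * μ)) := by
    intro m
    rw [ha, ← Complex.exp_conj]
    congr 1
    simp only [_root_.map_mul, Complex.conj_I, Complex.conj_ofReal, Complex.conj_natCast]
    ring
  intro j
  simp only [vecMul, dotProduct, Matrix.sub_apply, Matrix.smul_apply, hJ1a, hJ2, hJ1,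
    Pi.star_apply, RCLike.star_def, smul_eq_mul, hconj]
  rcases Nat.eq_zero_or_pos (j:ℕ) with h0 | h0
  · rw [if_pos h0]
    rw [Finset.sum_eq_single (⟨0, by omega⟩ : Fin (M-1))]
    · have : (j:ℕ) ≠ 0 + 1 := by omega
      simp [this, h0]
    · intro b _ hb
      have h1 : (j:ℕ) ≠ (b:ℕ) + 1 := by omega
      have h2 : (j:ℕ) ≠ (b:ℕ) := by
        intro h; apply hb; apply Fin.ext; simp; omega
      simp [h1, h2]
    · simp
  · rw [if_neg (by omega)]
    by_cases hlast : (j:ℕ) = M - 1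
    · rw [if_pos hlast]
      rw [Finset.sum_eq_single (⟨(j:ℕ) - 1, by omega⟩ : Fin (M-1))]
      · have h1 : (j:ℕ) = ((j:ℕ)-1) + 1 := by omega
        have h2 : (j:ℕ) ≠ ((j:ℕ)-1) := by omega
        simp only [Fin.val_mk, if_pos h1, if_neg h2, mul_one, mul_zero, sub_zero]
        exact exp_step μ ((j:ℕ)-1) (j:ℕ) h1
      · intro b _ hb
        have h1 : (j:ℕ) ≠ (b:ℕ) + 1 := by
          intro h; apply hb; apply Fin.ext; simp; omega
        have h2 : (j:ℕ) ≠ (b:ℕ) := by omega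
        simp [h1, h2]
      · simp
    · rw [if_neg hlast]
      have hjlt : (j:ℕ) < M - 1 := by omega
      have key : ∀ b : Fin (M-1),
          Complex.exp (-(Complex.I * ((b:ℕ):ℂ) * μ)) *
            (Complex.exp (-(Complex.I * (μ:ℂ))) * (if (j:ℕ) = (b:ℕ)+1 then (1:ℂ) else 0)
              - (if (j:ℕ) = (b:ℕ) then 1 else 0))
          = (if b = (⟨(j:ℕ)-1, by omega⟩ : Fin (M-1)) then Complex.exp (-(Complex.I * ((j:ℕ):ℂ) * μ)) else 0)
            - (if b = (⟨(j:ℕ), by omega⟩ : Fin (M-1)) then Complex.exp (-(Complex.I * ((j:ℕ):ℂ) * μ)) else 0) := by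
        intro b
        by_cases hb1 : (j:ℕ) = (b:ℕ) + 1
        · have e1 : b = (⟨(j:ℕ)-1, by omega⟩ : Fin (M-1)) := by apply Fin.ext; simp; omega
          have e2 : b ≠ (⟨(j:ℕ), by omega⟩ : Fin (M-1)) := by
            intro h; rw [Fin.ext_iff] at h; simp at h; omega
          have h2 : (j:ℕ) ≠ (b:ℕ) := by omega
          rw [if_pos hb1, if_neg h2, if_pos e1, if_neg e2]
          rw [mul_one, sub_zero, sub_zero]
          exact exp_step μ (b:ℕ) (j:ℕ) hb1
        · rw [if_neg hb1]
          by_cases hb2 : (j:ℕ) = (b:ℕ)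
          · have e1 : b ≠ (⟨(j:ℕ)-1, by omega⟩ : Fin (M-1)) := by
              intro h; rw [Fin.ext_iff] at h; simp at h; omega
            have e2 : b = (⟨(j:ℕ), by omega⟩ : Fin (M-1)) := by apply Fin.ext; simp; omega
            rw [if_pos hb2, if_neg e1, if_pos e2, hb2]
            ring
          · have e1 : b ≠ (⟨(j:ℕ)-1, by omega⟩ : Fin (M-1)) := by
              intro h; rw [Fin.ext_iff] at h; simp at h; omega
            have e2 : b ≠ (⟨(j:ℕ), by omega⟩ : Fin (M-1)) := by
              intro h; rw [Fin.ext_iff] at h; simp at h; omega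
            simp [hb1, hb2, e1, e2]
      rw [Finset.sum_congr rfl (fun b _ => key b), Finset.sum_sub_distrib,
        Finset.sum_ite_eq', Finset.sum_ite_eq']
      simp

/-- Single-source analysis of 1-D Standard ESPRIT (Theorem 5 / Appendix E of the
paper): the explicit form of the row vector
`ãᵀ = (√M/(M−1))·(J₁a)ᴴ·(e^{−iμ}J₂ − J₁)·(I − aaᴴ/M)` and its squared norm
`‖ã‖² = 2M/(M−1)²`. -/
theorem single_source_esprit_error_vector
    (M : ℕ) (hM : 2 ≤ M) (μ : ℝ)
    (a : Fin M → ℂ)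
    (ha : ∀ m, a m = Complex.exp (Complex.I * ((m : ℕ) : ℂ) * (μ : ℂ)))
    (J1 J2 : Matrix (Fin (M - 1)) (Fin M) ℂ)
    (hJ1 : ∀ k m, J1 k m = if (m : ℕ) = (k : ℕ) then 1 else 0)
    (hJ2 : ∀ k m, J2 k m = if (m : ℕ) = (k : ℕ) + 1 then 1 else 0)
    (atilde : Fin M → ℂ)
    (hat : atilde = ((Real.sqrt M / ((M : ℝ) - 1) : ℝ) : ℂ) •
      (star (J1 *ᵥ a) ᵥ*
        ((Complex.exp (-(Complex.I * (μ : ℂ))) • J2 - J1) *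
          ((1 : Matrix (Fin M) (Fin M) ℂ) - ((M : ℂ))⁻¹ • vecMulVec a (star a))))) :
    atilde ⟨0, by omega⟩ = -(((Real.sqrt M / ((M : ℝ) - 1) : ℝ) : ℂ)) ∧
    atilde ⟨M - 1, by omega⟩ =
      ((Real.sqrt M / ((M : ℝ) - 1) : ℝ) : ℂ) *
        Complex.exp (-(Complex.I * (((M : ℝ) - 1 : ℝ) : ℂ) * (μ : ℂ))) ∧
    (∀ m : Fin M, 0 < (m : ℕ) → (m : ℕ) < M - 1 → atilde m = 0) ∧
    ∑ m, ‖atilde m‖ ^ 2 = 2 * (M : ℝ) / ((M : ℝ) - 1) ^ 2 := by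
  set c : ℝ := Real.sqrt M / ((M : ℝ) - 1) with hc
  set y : Fin M → ℂ := star (J1 *ᵥ a) ᵥ* (Complex.exp (-(Complex.I * (μ : ℂ))) • J2 - J1) with hydef
  have hy : ∀ j : Fin M, y j = if (j:ℕ) = 0 then -1 else if (j:ℕ) = M - 1
      then Complex.exp (-(Complex.I * ((j:ℕ):ℂ) * μ)) else 0 :=
    esprit_y M hM μ a ha J1 J2 hJ1 hJ2
  set z0 : Fin M := ⟨0, by omega⟩ with hz0
  set zM : Fin M := ⟨M - 1, by omega⟩ with hzM
  have hzne : z0 ≠ zM := by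
    intro h; rw [Fin.ext_iff] at h; simp [hz0, hzM] at h; omega
  -- dot product of y with a is zero
  have hdot : ∑ j, y j * a j = 0 := by
    have hpt : ∀ j : Fin M, y j * a j =
        (if j = z0 then (-1:ℂ) else 0) + (if j = zM then (1:ℂ) else 0) := by
      intro j
      rw [hy, ha]
      by_cases h0 : (j:ℕ) = 0
      · have e0 : j = z0 := Fin.ext h0
        have eM : j ≠ zM := by rw [e0]; exact hzne
        rw [if_pos h0, if_pos e0, if_neg eM, h0]
        simp
      · have e0 : j ≠ z0 := fun h => h0 (by rw [h])
        rw [if_neg h0, if_neg e0]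
        by_cases h1 : (j:ℕ) = M - 1
        · have eM : j = zM := by
            rw [Fin.ext_iff]; simp [hzM]; omega
          rw [if_pos h1, if_pos eM, ← Complex.exp_add, neg_add_cancel, Complex.exp_zero]
          norm_num
        · have eM : j ≠ zM := by
            intro h; rw [Fin.ext_iff] at h; simp [hzM] at h; omega
          rw [if_neg h1, if_neg eM]
          simp
    rw [Finset.sum_congr rfl (fun j _ => hpt j), Finset.sum_add_distrib,
      Finset.sum_ite_eq', Finset.sum_ite_eq']
    simp
  -- atilde m = c * y m
  have hatm : ∀ m : Fin M, atilde m = (c:ℂ) * y m := by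
    intro m
    rw [hat, ← Matrix.vecMul_vecMul, ← hydef]
    simp only [Pi.smul_apply, smul_eq_mul]
    congr 1
    simp only [vecMul, dotProduct, Matrix.sub_apply, Matrix.one_apply, Matrix.smul_apply,
      vecMulVec_apply, Pi.star_apply, RCLike.star_def, smul_eq_mul]
    have hpt : ∀ j : Fin M, y j * ((if j = m then (1:ℂ) else 0)
        - (M:ℂ)⁻¹ * (a j * (starRingEnd ℂ) (a m)))
        = (if j = m then y j else 0) - ((M:ℂ)⁻¹ * (starRingEnd ℂ) (a m)) * (y j * a j) := by
      intro j
      by_cases h : j = m <;> simp [h] <;> ring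
    rw [Finset.sum_congr rfl (fun j _ => hpt j), Finset.sum_sub_distrib,
      Finset.sum_ite_eq', ← Finset.mul_sum, hdot]
    simp
  have h1 : atilde z0 = -(c:ℂ) := by
    rw [hatm, hy]
    simp [hz0]
  have h2 : atilde zM = (c:ℂ) * Complex.exp (-(Complex.I * (((M : ℝ) - 1 : ℝ) : ℂ) * (μ : ℂ))) := by
    rw [hatm, hy]
    have hne : (zM:ℕ) ≠ 0 := by simp [hzM]; omega
    have heq : (zM:ℕ) = M - 1 := by simp [hzM]
    rw [if_neg hne, if_pos heq]
    congr 3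
    rw [heq]
    push_cast [Nat.cast_sub (by omega : 1 ≤ M)]
    ring
  have h3 : ∀ m : Fin M, 0 < (m : ℕ) → (m : ℕ) < M - 1 → atilde m = 0 := by
    intro m hm1 hm2
    rw [hatm, hy, if_neg (by omega), if_neg (by omega), mul_zero]
  refine ⟨h1, h2, h3, ?_⟩
  have hnorm : ∀ m : Fin M, ‖atilde m‖ ^ 2 =
      (if m = z0 then c^2 else 0) + (if m = zM then c^2 else 0) := by
    intro m
    by_cases e0 : m = z0
    · rw [e0, if_pos rfl, if_neg hzne, h1]
      simp [sq_abs]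
    · rw [if_neg e0]
      by_cases eM : m = zM
      · rw [eM, if_pos rfl, h2]
        simp [Complex.norm_exp, sq_abs]
      · rw [if_neg eM, h3 m ?_ ?_]
        · simp
        · rcases Nat.eq_zero_or_pos (m:ℕ) with h | h
          · exact absurd (Fin.ext h) e0
          · exact h
        · by_contra h
          push_neg at h
          have : (m:ℕ) = M - 1 := by omega
          exact eM (Fin.ext this)
  rw [Finset.sum_congr rfl (fun m _ => hnorm m), Finset.sum_add_distrib,
    Finset.sum_ite_eq', Finset.sum_ite_eq']
  simp only [Finset.mem_univ, if_pos]
  have hcsq : c^2 = (M:ℝ) / ((M:ℝ)-1)^2 := by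
    rw [hc, div_pow, Real.sq_sqrt (by positivity)]
  rw [hcsq]; ring
end

section
/- Let M ∈ ℕ with M ≥ 2, μ ∈ ℝ, N ≥ 1, let s ∈ ℂ^N be nonzero and let σ ∈ ℝ. Let a ∈ ℂ^M be the ULA steering vector with entries a_m = exp(i·m·μ) for m = 0,…,M−1, and let J₁, J₂ ∈ ℂ^{(M−1)×M} be the maximum-overlap selection matrices with (J₁)_{k,m} = 1 if m = k and 0 otherwise, and (J₂)_{k,m} = 1 if m = k+1 and 0 otherwise. Define ãᵀ := (√M/(M−1)) · (J₁·a)ᴴ · (e^{−iμ}·J₂ − J₁) · (I_M − (1/M)·a·aᴴ) and s̃ := conj(s)/(√M·‖s‖²) ∈ ℂ^N. Then the first-order mean square error of 1-D Standard ESPRIT for a single source, (σ²/2)·‖s̃‖²·‖ã‖², equals (σ²/‖s‖²)·1/(M−1)²; that is, with effective SNR ρ̂ := ‖s‖²/σ², the MSE equals (1/ρ̂)·1/(M−1)². -/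
open Matrix BigOperators

/-!
The steering vector is geometric, `a m = z ^ m` with `z = exp (I μ)` on the unit circle, so the
shift invariance of the two subarrays makes `(J₁ a)ᴴ (z̄ J₂ - J₁)` telescope to the row
`(e_{M-1} - e_0) ⊙ ā`. That row is orthogonal to `a`, hence fixed by the projector
`I - a aᴴ / M`, and has squared norm `2`; so `‖ã‖² = 2M / (M - 1)²`, while `‖s̃‖² = 1 / (M ‖s‖²)`.
-/

open Complex

theorem Fin.sum_ite_val_eq {R : Type*} [AddCommMonoid R] {M : ℕ} (f : Fin M → R) (k : ℕ) :
    (∑ i : Fin M, if (i : ℕ) = k then f i else 0) = if h : k < M then f ⟨k, h⟩ else 0 := by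
  split_ifs with h
  · rw [Finset.sum_eq_single ⟨k, h⟩ (fun i _ hi => if_neg fun hik => hi (Fin.ext hik))
      (by simp)]
    simp
  · exact Finset.sum_eq_zero fun i _ => if_neg fun hik : (i : ℕ) = k => h (hik ▸ i.isLt)

theorem sum_norm_sq_smul {ι 𝕜 E : Type*} [Fintype ι] [NormedField 𝕜] [SeminormedAddCommGroup E]
    [NormedSpace 𝕜 E] (c : 𝕜) (v : ι → E) :
    ∑ i, ‖(c • v) i‖ ^ 2 = ‖c‖ ^ 2 * ∑ i, ‖v i‖ ^ 2 := by
  simp only [Pi.smul_apply, norm_smul, mul_pow, Finset.mul_sum]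

theorem sum_norm_sq_conj_div {ι 𝕜 : Type*} [Fintype ι] [RCLike 𝕜] (s : ι → 𝕜) (c : 𝕜) :
    ∑ i, ‖starRingEnd 𝕜 (s i) / c‖ ^ 2 = (∑ i, ‖s i‖ ^ 2) / ‖c‖ ^ 2 := by
  simp only [norm_div, RCLike.norm_conj, div_pow, Finset.sum_div]

theorem Matrix.vecMul_one_sub_smul_vecMulVec_of_dotProduct_eq_zero {ι α : Type*} [Fintype ι]
    [DecidableEq ι] [CommRing α] {v a : ι → α} (h : v ⬝ᵥ a = 0) (c : α) (b : ι → α) :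
    v ᵥ* (1 - c • vecMulVec a b) = v := by
  rw [vecMul_sub, vecMul_one, vecMul_smul, vecMul_vecMulVec, h, zero_smul, smul_zero, sub_zero]

section Selection

variable (R : Type*) [NonAssocSemiring R] (M : ℕ)

def subarraySelection₁ : Matrix (Fin (M - 1)) (Fin M) R :=
  of fun k m => if (m : ℕ) = k then 1 else 0

def subarraySelection₂ : Matrix (Fin (M - 1)) (Fin M) R :=
  of fun k m => if (m : ℕ) = k + 1 then 1 else 0

variable {R M}

theorem subarraySelection₁_mulVec_apply (a : Fin M → R) (k : Fin (M - 1)) :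
    (subarraySelection₁ R M *ᵥ a) k = a ⟨k, by omega⟩ := by
  simp [subarraySelection₁, mulVec, dotProduct, Fin.sum_ite_val_eq, show (k : ℕ) < M by omega]

theorem vecMul_subarraySelection₁_apply (x : Fin (M - 1) → R) (m : Fin M) :
    (x ᵥ* subarraySelection₁ R M) m = if h : (m : ℕ) < M - 1 then x ⟨m, h⟩ else 0 := by
  simp [subarraySelection₁, vecMul, dotProduct, eq_comm (a := (m : ℕ)), Fin.sum_ite_val_eq]

theorem vecMul_subarraySelection₂_apply (x : Fin (M - 1) → R) (m : Fin M) :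
    (x ᵥ* subarraySelection₂ R M) m = if h : 0 < (m : ℕ) then x ⟨m - 1, by omega⟩ else 0 := by
  have hcond (k : Fin (M - 1)) : (m : ℕ) = k + 1 ↔ 0 < (m : ℕ) ∧ (k : ℕ) = m - 1 := by omega
  simp only [subarraySelection₂, vecMul, dotProduct, of_apply, mul_ite, mul_one, mul_zero, hcond,
    ite_and]
  split_ifs with hm
  · rw [Fin.sum_ite_val_eq, dif_pos (by omega)]
  · simp

end Selection

def ulaSteering (M : ℕ) (z : ℂ) : Fin M → ℂ := fun m => z ^ (m : ℕ)

def endpointDifference (M : ℕ) : Fin M → ℂ :=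
  fun m => (if (m : ℕ) = M - 1 then 1 else 0) - (if (m : ℕ) = 0 then 1 else 0)

theorem norm_ulaSteering_apply {M : ℕ} {z : ℂ} (hz : ‖z‖ = 1) (m : Fin M) :
    ‖ulaSteering M z m‖ = 1 := by
  simp [ulaSteering, hz]

theorem star_mulVec_ulaSteering_vecMul_subarraySelection_sub {M : ℕ} (z : ℂ) :
    star (subarraySelection₁ ℂ M *ᵥ ulaSteering M z) ᵥ*
        (star z • subarraySelection₂ ℂ M - subarraySelection₁ ℂ M) =
      endpointDifference M * star (ulaSteering M z) := by
  funext m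
  rw [vecMul_sub, vecMul_smul, Pi.sub_apply, Pi.smul_apply, vecMul_subarraySelection₁_apply,
    vecMul_subarraySelection₂_apply]
  simp only [Pi.star_apply, subarraySelection₁_mulVec_apply, ulaSteering, star_pow, Pi.mul_apply,
    endpointDifference, smul_eq_mul]
  by_cases hpos : 0 < (m : ℕ)
  · rw [dif_pos hpos, ← pow_succ', Nat.sub_add_cancel hpos]
    split_ifs <;> first | omega | ring
  · rw [dif_neg hpos]
    split_ifs <;> first | omega | ring

theorem endpointDifference_mul_star_dotProduct {M : ℕ} {a : Fin M → ℂ} (ha : ∀ m, ‖a m‖ = 1) :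
    (endpointDifference M * star a) ⬝ᵥ a = 0 := by
  have hunit (m : Fin M) : star (a m) * a m = 1 := by
    rw [Complex.star_def, Complex.conj_mul', ha, Complex.ofReal_one, one_pow]
  simp only [dotProduct, Pi.mul_apply, Pi.star_apply, mul_assoc, hunit, mul_one,
    endpointDifference, Finset.sum_sub_distrib, Fin.sum_ite_val_eq]
  split_ifs <;> first | rfl | omega | simp

theorem sum_norm_sq_endpointDifference_mul {M : ℕ} (hM : 2 ≤ M) {a : Fin M → ℂ}
    (ha : ∀ m, ‖a m‖ = 1) : ∑ m, ‖(endpointDifference M * a) m‖ ^ 2 = 2 := by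
  have hterm (m : Fin M) : ‖(endpointDifference M * a) m‖ ^ 2 =
      (if (m : ℕ) = M - 1 then 1 else 0) + (if (m : ℕ) = 0 then 1 else 0) := by
    simp only [Pi.mul_apply, norm_mul, ha, mul_one, endpointDifference]
    split_ifs <;> first | omega | simp
  simp only [hterm, Finset.sum_add_distrib, Fin.sum_ite_val_eq]
  split_ifs <;> first | omega | norm_num

theorem single_source_esprit_mse_general
    (M : ℕ) (hM : 2 ≤ M) (μ : ℝ)
    (N : ℕ) (s : Fin N → ℂ) (σ : ℝ)
    (a : Fin M → ℂ)
    (ha : ∀ m, a m = Complex.exp (Complex.I * ((m : ℕ) : ℂ) * (μ : ℂ)))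
    (J1 J2 : Matrix (Fin (M - 1)) (Fin M) ℂ)
    (hJ1 : ∀ k m, J1 k m = if (m : ℕ) = (k : ℕ) then 1 else 0)
    (hJ2 : ∀ k m, J2 k m = if (m : ℕ) = (k : ℕ) + 1 then 1 else 0)
    (atilde : Fin M → ℂ)
    (hat : atilde = ((Real.sqrt M / ((M : ℝ) - 1) : ℝ) : ℂ) •
      (star (J1 *ᵥ a) ᵥ*
        ((Complex.exp (-(Complex.I * (μ : ℂ))) • J2 - J1) *
          ((1 : Matrix (Fin M) (Fin M) ℂ) - ((M : ℂ))⁻¹ • vecMulVec a (star a)))))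
    (stilde : Fin N → ℂ)
    (hst : ∀ j, stilde j =
      (starRingEnd ℂ) (s j) / (((Real.sqrt M : ℝ) : ℂ) * (((∑ i, ‖s i‖ ^ 2 : ℝ)) : ℂ))) :
    (σ ^ 2 / 2) * (∑ j, ‖stilde j‖ ^ 2) * (∑ m, ‖atilde m‖ ^ 2) =
      (σ ^ 2 / (∑ i, ‖s i‖ ^ 2)) * (1 / ((M : ℝ) - 1) ^ 2) := by
  obtain rfl : J1 = subarraySelection₁ ℂ M := ext hJ1
  obtain rfl : J2 = subarraySelection₂ ℂ M := ext hJ2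
  set z := exp (I * μ) with hz_def
  obtain rfl : a = ulaSteering M z := funext fun m => by
    rw [ha, ulaSteering, ← exp_nat_mul, mul_comm I, mul_assoc]
  have hz : ‖z‖ = 1 := hz_def ▸ norm_exp_I_mul_ofReal μ
  have hz_inv : exp (-(I * μ)) = star z := by
    rw [hz_def, Complex.star_def, ← Complex.exp_conj]
    simp
  have hrow : atilde = ((√M / (M - 1) : ℝ) : ℂ) • (endpointDifference M * star (ulaSteering M z)) := by
    rw [hat, hz_inv, ← vecMul_vecMul, star_mulVec_ulaSteering_vecMul_subarraySelection_sub,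
      vecMul_one_sub_smul_vecMulVec_of_dotProduct_eq_zero]
    exact endpointDifference_mul_star_dotProduct (norm_ulaSteering_apply hz)
  have hM1 : (M : ℝ) - 1 ≠ 0 := by
    have : (2 : ℝ) ≤ M := by exact_mod_cast hM
    linarith
  have hscale_norm (x : ℝ) : ‖((√M : ℝ) : ℂ) * (x : ℂ)‖ ^ 2 = M * x ^ 2 := by
    rw [norm_mul, mul_pow, Complex.norm_real, Complex.norm_real, Real.norm_eq_abs, sq_abs,
      Real.norm_eq_abs, sq_abs, Real.sq_sqrt (Nat.cast_nonneg M)]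
  have hstar_norm (m : Fin M) : ‖star (ulaSteering M z) m‖ = 1 := by
    rw [Pi.star_apply, norm_star, norm_ulaSteering_apply hz]
  simp only [hst, sum_norm_sq_conj_div, hscale_norm]
  rw [hrow, sum_norm_sq_smul, sum_norm_sq_endpointDifference_mul hM hstar_norm, Complex.norm_real,
    Real.norm_eq_abs, sq_abs, div_pow, Real.sq_sqrt (Nat.cast_nonneg M)]
  field_simp

/-- Mean square error part of Theorem 5 of the paper: for a single source on an
`M`-element ULA with symbol vector `s` and noise variance `σ²`, the first-order MSE of
1-D Standard ESPRIT, `(σ²/2)·‖s̃‖²·‖ã‖²`, equals `(σ²/‖s‖²)·1/(M−1)²`, i.e.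
`(1/ρ̂)·1/(M−1)²` with effective SNR `ρ̂ = ‖s‖²/σ²`. -/
theorem single_source_esprit_mse
    (M : ℕ) (hM : 2 ≤ M) (μ : ℝ)
    (N : ℕ) (hN : 1 ≤ N) (s : Fin N → ℂ) (hs : s ≠ 0) (σ : ℝ)
    (a : Fin M → ℂ)
    (ha : ∀ m, a m = Complex.exp (Complex.I * ((m : ℕ) : ℂ) * (μ : ℂ)))
    (J1 J2 : Matrix (Fin (M - 1)) (Fin M) ℂ)
    (hJ1 : ∀ k m, J1 k m = if (m : ℕ) = (k : ℕ) then 1 else 0)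
    (hJ2 : ∀ k m, J2 k m = if (m : ℕ) = (k : ℕ) + 1 then 1 else 0)
    (atilde : Fin M → ℂ)
    (hat : atilde = ((Real.sqrt M / ((M : ℝ) - 1) : ℝ) : ℂ) •
      (star (J1 *ᵥ a) ᵥ*
        ((Complex.exp (-(Complex.I * (μ : ℂ))) • J2 - J1) *
          ((1 : Matrix (Fin M) (Fin M) ℂ) - ((M : ℂ))⁻¹ • vecMulVec a (star a)))))
    (stilde : Fin N → ℂ)
    (hst : ∀ j, stilde j =
      (starRingEnd ℂ) (s j) / (((Real.sqrt M : ℝ) : ℂ) * (((∑ i, ‖s i‖ ^ 2 : ℝ)) : ℂ))) :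
    (σ ^ 2 / 2) * (∑ j, ‖stilde j‖ ^ 2) * (∑ m, ‖atilde m‖ ^ 2) =
      (σ ^ 2 / (∑ i, ‖s i‖ ^ 2)) * (1 / ((M : ℝ) - 1) ^ 2) :=
  single_source_esprit_mse_general M hM μ N s σ a ha J1 J2 hJ1 hJ2 atilde hat stilde hst
end

section
/- For M ∈ ℕ with M ≥ 2, define the asymptotic efficiency of LS-based 1-D Standard ESPRIT for a single source as η(M) := (6/(M·(M²−1))) / (1/(M−1)²) = 6·(M−1)/(M·(M+1)). Then: (i) η(2) = 1 and η(3) = 1; (ii) η(M) < 1 for all M ≥ 4; and (iii) η(M) → 0 as M → ∞. -/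
open Filter

/-- Asymptotic efficiency statement of Theorem 5 of the paper: the efficiency
`η(M) = CRB/MSE = (6/(M(M²−1)))/(1/(M−1)²) = 6(M−1)/(M(M+1))` of LS-based 1-D Standard
ESPRIT for a single source equals 1 for `M = 2, 3`, is strictly below 1 for `M ≥ 4`,
and tends to 0 as `M → ∞`. -/
theorem ls_esprit_asymptotic_efficiency
    (η : ℕ → ℝ)
    (hη : ∀ M, 2 ≤ M →
      η M = (6 / ((M : ℝ) * ((M : ℝ) ^ 2 - 1))) / (1 / ((M : ℝ) - 1) ^ 2)) :
    (∀ M, 2 ≤ M → η M = 6 * ((M : ℝ) - 1) / ((M : ℝ) * ((M : ℝ) + 1))) ∧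
    η 2 = 1 ∧ η 3 = 1 ∧
    (∀ M, 4 ≤ M → η M < 1) ∧
    Tendsto η atTop (nhds 0) := by
  have key : ∀ M, 2 ≤ M → η M = 6 * ((M : ℝ) - 1) / ((M : ℝ) * ((M : ℝ) + 1)) := by
    intro M hM
    have hM2 : (2 : ℝ) ≤ (M : ℝ) := by exact_mod_cast hM
    have h1 : (M : ℝ) - 1 ≠ 0 := by nlinarith
    have h0 : (M : ℝ) ≠ 0 := by nlinarith
    have hp1 : (M : ℝ) + 1 ≠ 0 := by nlinarith
    have h2 : (M : ℝ) ^ 2 - 1 ≠ 0 := by nlinarith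
    rw [hη M hM]
    field_simp
    ring
  refine ⟨key, ?_, ?_, ?_, ?_⟩
  · rw [key 2 (by norm_num)]; norm_num
  · rw [key 3 (by norm_num)]; norm_num
  · intro M hM
    have hM4 : (4 : ℝ) ≤ (M : ℝ) := by exact_mod_cast hM
    rw [key M (by omega)]
    rw [div_lt_one (by nlinarith)]
    nlinarith
  · have hb : Tendsto (fun M : ℕ => 6 / (M : ℝ)) atTop (nhds 0) :=
      tendsto_const_div_atTop_nhds_zero_nat 6
    refine squeeze_zero' ?_ ?_ hb
    · filter_upwards [eventually_ge_atTop 2] with M hM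
      have hM2 : (2 : ℝ) ≤ (M : ℝ) := by exact_mod_cast hM
      rw [key M hM]
      apply div_nonneg <;> nlinarith
    · filter_upwards [eventually_ge_atTop 2] with M hM
      have hM2 : (2 : ℝ) ≤ (M : ℝ) := by exact_mod_cast hM
      rw [key M hM, div_le_div_iff₀ (by nlinarith) (by nlinarith)]
      nlinarith
end

section
/- Let M ∈ ℕ with M ≥ 2. Let G ∈ ℝ^{(M−1)×(M−1)} be the matrix with entries (for k, l = 0,…,M−2) G_{k,l} = 1/M + 2·δ_{k,l} − δ_{k,l+1} − δ_{l,k+1}, i.e. G = (1/M)·𝟙𝟙ᵀ + 2·I_{M−1} − J₁·J₂ᴴ − J₂·J₁ᴴ where 𝟙 is the all-ones vector. Let H ∈ ℝ^{(M−1)×(M−1)} be the matrix with entries (indexing rows and columns by m₁, m₂ ∈ {1,…,M−1}) H_{m₁,m₂} = (1/M)·( (M − max(m₁,m₂))·min(m₁,m₂) − 3·m₁·(M−m₁)·m₂·(M−m₂)/(M²+11) ). Then G·H = I_{M−1}, i.e. H = G^{-1}. -/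
open Matrix BigOperators

/-- The entry function of the claimed inverse `H`, with 1-based indices `a b`. -/
noncomputable def slsH (M a b : ℕ) : ℝ :=
  (1 / (M : ℝ)) *
    (((M : ℝ) - ((max a b : ℕ) : ℝ)) * ((min a b : ℕ) : ℝ) -
      3 * (a : ℝ) * ((M : ℝ) - (a : ℝ)) * (b : ℝ) * ((M : ℝ) - (b : ℝ)) /
        ((M : ℝ) ^ 2 + 11))

lemma slsH_zero (M b : ℕ) : slsH M 0 b = 0 := by
  simp [slsH]

lemma slsH_top (M b : ℕ) (hb : b ≤ M) : slsH M M b = 0 := by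
  have h1 : max M b = M := max_eq_left hb
  simp [slsH, h1]

lemma sum_range_cast (N : ℕ) :
    ∑ i ∈ Finset.range N, (i : ℝ) = (N : ℝ) * ((N : ℝ) - 1) / 2 := by
  induction N with
  | zero => simp
  | succ n ih => rw [Finset.sum_range_succ, ih]; push_cast; ring

lemma sum_range_sq (N : ℕ) :
    ∑ i ∈ Finset.range N, (i : ℝ) ^ 2 =
      (N : ℝ) * ((N : ℝ) - 1) * (2 * (N : ℝ) - 1) / 6 := by
  induction N with
  | zero => simp
  | succ n ih => rw [Finset.sum_range_succ, ih]; push_cast; ring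

lemma sum_quad (M : ℕ) :
    ∑ m ∈ Finset.range M, (m : ℝ) * ((M : ℝ) - (m : ℝ)) =
      (M : ℝ) * ((M : ℝ) ^ 2 - 1) / 6 := by
  have : ∀ m ∈ Finset.range M,
      (m : ℝ) * ((M : ℝ) - (m : ℝ)) = (M : ℝ) * (m : ℝ) - (m : ℝ) ^ 2 := by
    intro m _; ring
  rw [Finset.sum_congr rfl this, Finset.sum_sub_distrib, ← Finset.mul_sum,
    sum_range_cast, sum_range_sq]
  ring

lemma sum_lin (M n : ℕ) (hn : n < M) :
    ∑ m ∈ Finset.range M, ((M : ℝ) - ((max m n : ℕ) : ℝ)) * ((min m n : ℕ) : ℝ) =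
      (M : ℝ) * (n : ℝ) * ((M : ℝ) - (n : ℝ)) / 2 := by
  have hle : n + 1 ≤ M := hn
  rw [← Finset.sum_range_add_sum_Ico _ hle]
  have h1 : ∑ m ∈ Finset.range (n + 1),
      ((M : ℝ) - ((max m n : ℕ) : ℝ)) * ((min m n : ℕ) : ℝ)
      = ((M : ℝ) - (n : ℝ)) * ∑ m ∈ Finset.range (n + 1), (m : ℝ) := by
    rw [Finset.mul_sum]
    refine Finset.sum_congr rfl fun m hm => ?_
    have hm' : m ≤ n := by
      have := Finset.mem_range.mp hm; omega
    rw [max_eq_right hm', min_eq_left hm']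
  have h2 : ∑ m ∈ Finset.Ico (n + 1) M,
      ((M : ℝ) - ((max m n : ℕ) : ℝ)) * ((min m n : ℕ) : ℝ)
      = ∑ i ∈ Finset.range (M - (n + 1)), ((M : ℝ) - (n : ℝ) - 1 - (i : ℝ)) * (n : ℝ) := by
    rw [Finset.sum_Ico_eq_sum_range]
    refine Finset.sum_congr rfl fun i hi => ?_
    have hle' : n ≤ n + 1 + i := by omega
    rw [max_eq_left hle', min_eq_right hle']
    push_cast
    ring
  rw [h1, h2, sum_range_cast]
  have h3 : ∑ i ∈ Finset.range (M - (n + 1)),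
      ((M : ℝ) - (n : ℝ) - 1 - (i : ℝ)) * (n : ℝ)
      = ((M : ℝ) - (n : ℝ) - 1) * ((M - (n+1) : ℕ) : ℝ) * (n : ℝ)
        - (n : ℝ) * (((M - (n+1) : ℕ) : ℝ) * (((M - (n+1) : ℕ) : ℝ) - 1) / 2) := by
    have : ∀ i ∈ Finset.range (M - (n + 1)),
        ((M : ℝ) - (n : ℝ) - 1 - (i : ℝ)) * (n : ℝ)
        = ((M : ℝ) - (n : ℝ) - 1) * (n : ℝ) - (n : ℝ) * (i : ℝ) := by
      intro i _; ring
    rw [Finset.sum_congr rfl this, Finset.sum_sub_distrib, Finset.sum_const,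
      Finset.card_range, nsmul_eq_mul, ← Finset.mul_sum, sum_range_cast]
    ring
  rw [h3]
  have hc : ((M - (n+1) : ℕ) : ℝ) = (M : ℝ) - (n : ℝ) - 1 := by
    push_cast [Nat.cast_sub hle]; ring
  rw [hc]
  push_cast
  ring

/-- Lemma (A): the column sum of `H` (extended by the zero row `m = 0`). -/
lemma slsH_sum (M n : ℕ) (hM : 1 ≤ M) (hn : n < M) :
    ∑ m ∈ Finset.range M, slsH M m n =
      6 * (n : ℝ) * ((M : ℝ) - (n : ℝ)) / ((M : ℝ) ^ 2 + 11) := by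
  have hM0 : (M : ℝ) ≠ 0 := Nat.cast_ne_zero.mpr (by omega)
  have hD : (M : ℝ) ^ 2 + 11 ≠ 0 := by positivity
  have hsplit : ∀ m ∈ Finset.range M, slsH M m n =
      (1 / (M : ℝ)) * (((M : ℝ) - ((max m n : ℕ) : ℝ)) * ((min m n : ℕ) : ℝ))
      - (3 * (n : ℝ) * ((M : ℝ) - (n : ℝ)) / ((M : ℝ) * ((M : ℝ) ^ 2 + 11)))
          * ((m : ℝ) * ((M : ℝ) - (m : ℝ))) := by
    intro m _
    unfold slsH
    field_simp
  rw [Finset.sum_congr rfl hsplit, Finset.sum_sub_distrib, ← Finset.mul_sum,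
    ← Finset.mul_sum, sum_lin M n hn, sum_quad M]
  field_simp
  ring

/-- Lemma (B): the discrete second difference of a column of `H`. -/
lemma slsH_second_diff (M n k : ℕ) (hM : 1 ≤ M) :
    2 * slsH M (k + 1) n - slsH M k n - slsH M (k + 2) n =
      (if k + 1 = n then 1 else 0)
        - 6 * (n : ℝ) * ((M : ℝ) - (n : ℝ)) / ((M : ℝ) * ((M : ℝ) ^ 2 + 11)) := by
  have hM0 : (M : ℝ) ≠ 0 := Nat.cast_ne_zero.mpr (by omega)
  have hD : (M : ℝ) ^ 2 + 11 ≠ 0 := by positivity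
  rcases lt_trichotomy (k + 1) n with h | h | h
  · -- k + 1 < n
    rw [if_neg (by omega)]
    unfold slsH
    rw [max_eq_right (by omega : k ≤ n), min_eq_left (by omega : k ≤ n),
      max_eq_right (by omega : k + 1 ≤ n), min_eq_left (by omega : k + 1 ≤ n),
      max_eq_right (by omega : k + 2 ≤ n), min_eq_left (by omega : k + 2 ≤ n)]
    push_cast
    field_simp
    ring
  · -- k + 1 = n
    subst h
    rw [if_pos rfl]
    unfold slsH
    rw [max_eq_right (by omega : k ≤ k + 1), min_eq_left (by omega : k ≤ k + 1),
      max_eq_right (le_refl (k + 1)), min_eq_left (le_refl (k + 1)),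
      max_eq_left (by omega : k + 1 ≤ k + 2), min_eq_right (by omega : k + 1 ≤ k + 2)]
    push_cast
    field_simp
    ring
  · -- n < k + 1, i.e. n ≤ k
    rw [if_neg (by omega)]
    unfold slsH
    rw [max_eq_left (by omega : n ≤ k), min_eq_right (by omega : n ≤ k),
      max_eq_left (by omega : n ≤ k + 1), min_eq_right (by omega : n ≤ k + 1),
      max_eq_left (by omega : n ≤ k + 2), min_eq_right (by omega : n ≤ k + 2)]
    push_cast
    field_simp
    ring

/-- Lemma 4 (Appendix G) of the paper: the explicit closed-form inverse `H = G⁻¹` of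
the matrix `G = (1/M)𝟙𝟙ᵀ + 2I − J₁J₂ᴴ − J₂J₁ᴴ` arising in the single-source analysis
of SLS-based ESPRIT. -/
theorem sls_G_inverse
    (M : ℕ) (hM : 2 ≤ M)
    (G H : Matrix (Fin (M - 1)) (Fin (M - 1)) ℝ)
    (hG : ∀ k l, G k l =
      1 / (M : ℝ) + (if k = l then 2 else 0) -
        (if (k : ℕ) = (l : ℕ) + 1 then 1 else 0) -
        (if (l : ℕ) = (k : ℕ) + 1 then 1 else 0))
    (hH : ∀ k l, H k l =
      (1 / (M : ℝ)) *
        (((M : ℝ) - ((max ((k : ℕ) + 1) ((l : ℕ) + 1) : ℕ) : ℝ)) *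
            ((min ((k : ℕ) + 1) ((l : ℕ) + 1) : ℕ) : ℝ) -
          3 * (((k : ℕ) + 1 : ℕ) : ℝ) * ((M : ℝ) - (((k : ℕ) + 1 : ℕ) : ℝ)) *
            (((l : ℕ) + 1 : ℕ) : ℝ) * ((M : ℝ) - (((l : ℕ) + 1 : ℕ) : ℝ)) /
            ((M : ℝ) ^ 2 + 11))) :
    G * H = 1 := by
  have hM0 : (M : ℝ) ≠ 0 := Nat.cast_ne_zero.mpr (by omega)
  have hD : (M : ℝ) ^ 2 + 11 ≠ 0 := by positivity
  have hNM : (M - 1) + 1 = M := by omega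
  ext k l
  have hkN : (k : ℕ) < M - 1 := k.2
  have hlN : (l : ℕ) < M - 1 := l.2
  -- the entry function version of H
  have hHf : ∀ j : Fin (M - 1), H j l = slsH M ((j : ℕ) + 1) ((l : ℕ) + 1) := by
    intro j; rw [hH]; rfl
  rw [Matrix.mul_apply]
  have hsumeq : ∑ j : Fin (M - 1), G k j * H j l
      = ∑ m ∈ Finset.range (M - 1),
        (1 / (M : ℝ) + (if (k : ℕ) = m then 2 else 0) -
          (if (k : ℕ) = m + 1 then 1 else 0) -
          (if m = (k : ℕ) + 1 then 1 else 0)) * slsH M (m + 1) ((l : ℕ) + 1) := by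
    rw [← Fin.sum_univ_eq_sum_range (fun m : ℕ =>
      (1 / (M : ℝ) + (if (k : ℕ) = m then 2 else 0) -
        (if (k : ℕ) = m + 1 then 1 else 0) -
        (if m = (k : ℕ) + 1 then 1 else 0)) * slsH M (m + 1) ((l : ℕ) + 1)) (M - 1)]
    refine Finset.sum_congr rfl fun j _ => ?_
    rw [hG, hHf]
    simp only [Fin.ext_iff]
  rw [hsumeq]
  have hstep2 : ∀ m ∈ Finset.range (M - 1),
      (1 / (M : ℝ) + (if (k : ℕ) = m then 2 else 0) -
          (if (k : ℕ) = m + 1 then 1 else 0) -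
          (if m = (k : ℕ) + 1 then 1 else 0)) * slsH M (m + 1) ((l : ℕ) + 1)
      = (1 / (M : ℝ)) * slsH M (m + 1) ((l : ℕ) + 1)
        + (if m = (k : ℕ) then 2 * slsH M (m + 1) ((l : ℕ) + 1) else 0)
        - (if (k : ℕ) = m + 1 then slsH M (m + 1) ((l : ℕ) + 1) else 0)
        - (if m = (k : ℕ) + 1 then slsH M (m + 1) ((l : ℕ) + 1) else 0) := by
    intro m _
    split_ifs <;> first | ring1 | (exfalso; omega)
  rw [Finset.sum_congr rfl hstep2, Finset.sum_sub_distrib, Finset.sum_sub_distrib,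
    Finset.sum_add_distrib, ← Finset.mul_sum]
  -- sum A
  have hA : ∑ m ∈ Finset.range (M - 1), slsH M (m + 1) ((l : ℕ) + 1)
      = 6 * (((l : ℕ) + 1 : ℕ) : ℝ) * ((M : ℝ) - (((l : ℕ) + 1 : ℕ) : ℝ)) / ((M : ℝ) ^ 2 + 11) := by
    have h0 := Finset.sum_range_succ' (fun m => slsH M m ((l : ℕ) + 1)) (M - 1)
    rw [hNM] at h0
    rw [← slsH_sum M ((l : ℕ) + 1) (by omega) (by omega), h0, slsH_zero, add_zero]
  -- sum B
  have hB : ∑ m ∈ Finset.range (M - 1),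
      (if m = (k : ℕ) then 2 * slsH M (m + 1) ((l : ℕ) + 1) else 0)
      = 2 * slsH M ((k : ℕ) + 1) ((l : ℕ) + 1) := by
    rw [Finset.sum_ite_eq' (Finset.range (M - 1)) ((k : ℕ))
      (fun m => 2 * slsH M (m + 1) ((l : ℕ) + 1)), if_pos (Finset.mem_range.mpr hkN)]
  -- sum C
  have hC : ∑ m ∈ Finset.range (M - 1),
      (if (k : ℕ) = m + 1 then slsH M (m + 1) ((l : ℕ) + 1) else 0)
      = slsH M (k : ℕ) ((l : ℕ) + 1) := by
    by_cases hk0 : (k : ℕ) = 0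
    · rw [hk0, slsH_zero]
      apply Finset.sum_eq_zero
      intro m _
      rw [if_neg (by omega)]
    · obtain ⟨k', hk'⟩ : ∃ k', (k : ℕ) = k' + 1 := ⟨(k : ℕ) - 1, by omega⟩
      have hcongr : ∀ m ∈ Finset.range (M - 1),
          (if (k : ℕ) = m + 1 then slsH M (m + 1) ((l : ℕ) + 1) else 0)
          = (if m = k' then slsH M (m + 1) ((l : ℕ) + 1) else 0) := by
        intro m _
        congr 1
        simp only [hk', eq_iff_iff]
        omega
      rw [Finset.sum_congr rfl hcongr, Finset.sum_ite_eq' (Finset.range (M - 1)) k'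
        (fun m => slsH M (m + 1) ((l : ℕ) + 1)), if_pos (Finset.mem_range.mpr (by omega)), hk']
  -- sum D
  have hD2 : ∑ m ∈ Finset.range (M - 1),
      (if m = (k : ℕ) + 1 then slsH M (m + 1) ((l : ℕ) + 1) else 0)
      = slsH M ((k : ℕ) + 2) ((l : ℕ) + 1) := by
    rw [Finset.sum_ite_eq' (Finset.range (M - 1)) ((k : ℕ) + 1)
      (fun m => slsH M (m + 1) ((l : ℕ) + 1))]
    by_cases hk1 : (k : ℕ) + 1 < M - 1
    · rw [if_pos (Finset.mem_range.mpr hk1)]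
    · rw [if_neg (by simp only [Finset.mem_range]; omega)]
      have hkm : (k : ℕ) + 2 = M := by omega
      rw [hkm, slsH_top M ((l : ℕ) + 1) (by omega)]
  rw [hA, hB, hC, hD2]
  have hdiff := slsH_second_diff M ((l : ℕ) + 1) (k : ℕ) (by omega)
  have hfin : (1 : Matrix (Fin (M - 1)) (Fin (M - 1)) ℝ) k l
      = if (k : ℕ) + 1 = (l : ℕ) + 1 then 1 else 0 := by
    rw [Matrix.one_apply]
    congr 1
    simp only [Fin.ext_iff, eq_iff_iff]
    omega
  rw [hfin]
  have hcancel : 1 / (M : ℝ) *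
      (6 * (((l : ℕ) + 1 : ℕ) : ℝ) * ((M : ℝ) - (((l : ℕ) + 1 : ℕ) : ℝ)) / ((M : ℝ) ^ 2 + 11))
      = 6 * (((l : ℕ) + 1 : ℕ) : ℝ) * ((M : ℝ) - (((l : ℕ) + 1 : ℕ) : ℝ))
          / ((M : ℝ) * ((M : ℝ) ^ 2 + 11)) := by
    field_simp
  rw [hcancel]
  push_cast at hdiff ⊢
  linarith [hdiff]
end

section
/- Let M ∈ ℕ with M ≥ 2 and let H ∈ ℝ^{(M−1)×(M−1)} be the matrix with entries (for m₁, m₂ ∈ {1,…,M−1}) H_{m₁,m₂} = (1/M)·( (M − max(m₁,m₂))·min(m₁,m₂) − 3·m₁·(M−m₁)·m₂·(M−m₂)/(M²+11) ). Then the sum of all entries of H satisfies Σ_{m₁=1}^{M−1} Σ_{m₂=1}^{M−1} H_{m₁,m₂} = (M−1)·M·(M+1)/(M²+11). -/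
/-!
Since `max a b * min a b = a * b`, each entry is `min a b - a b / M - c · p(a) p(b)` with
`p(a) = a (M - a)` and `c = 3 / (M (M² + 11))`, so the sum of all entries is
`∑∑ min(a, b) - (∑ a)² / M - c (∑ p(a))²`. With `n = M - 1` these sums are
`n(n+1)(2n+1)/6`, `n(n+1)/2` and `n(n+1)(n+2)/6`, and the result collapses to
`n(n+1)(n+2)/((n+1)² + 11)`.
-/

open Finset

section CharZero

variable {K : Type*} [Field K] [CharZero K]

lemma sum_range_cast_add_one (n : ℕ) : ∑ k ∈ range n, ((k : K) + 1) = (n : K) * (n + 1) / 2 := by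
  induction n with
  | zero => simp
  | succ n ih => rw [sum_range_succ, ih]; push_cast; ring

lemma sum_range_cast_add_one_sq (n : ℕ) :
    ∑ k ∈ range n, ((k : K) + 1) ^ 2 = (n : K) * (n + 1) * (2 * n + 1) / 6 := by
  induction n with
  | zero => simp
  | succ n ih => rw [sum_range_succ, ih]; push_cast; ring

lemma sum_range_cast_add_one_mul_sub (n : ℕ) :
    ∑ k ∈ range n, ((k : K) + 1) * (n + 1 - (k + 1)) = (n : K) * (n + 1) * (n + 2) / 6 := by
  simp only [mul_sub, sum_sub_distrib, ← sq, ← sum_mul, sum_range_cast_add_one,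
    sum_range_cast_add_one_sq]
  ring

end CharZero

section LinearOrderedField

variable {K : Type*} [Field K] [LinearOrder K] [IsStrictOrderedRing K]

lemma sum_range_min_cast_add_one_left (n : ℕ) :
    ∑ l ∈ range n, min ((n : K) + 1) (l + 1) = (n : K) * (n + 1) / 2 := by
  rw [← sum_range_cast_add_one]
  refine sum_congr rfl fun l hl => min_eq_right ?_
  have : (l : K) < n := by exact_mod_cast mem_range.mp hl
  linarith

lemma sum_range_sum_range_min_cast_add_one (n : ℕ) :
    ∑ k ∈ range n, ∑ l ∈ range n, min ((k : K) + 1) (l + 1) =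
      (n : K) * (n + 1) * (2 * n + 1) / 6 := by
  induction n with
  | zero => simp
  | succ n ih =>
    have hrow := sum_range_min_cast_add_one_left (K := K) n
    have hcol : ∑ k ∈ range n, min ((k : K) + 1) (n + 1) = (n : K) * (n + 1) / 2 := by
      simpa only [min_comm] using hrow
    simp only [sum_range_succ, sum_add_distrib, ih, hrow, hcol, min_self]
    push_cast
    ring

/-- The entry `H_{a,b}` of the paper's `H = G⁻¹`, with `a, b ∈ {1, …, M - 1}`. -/
def slsInverseEntry (M a b : K) : K :=
  1 / M * ((M - max a b) * min a b - 3 * a * (M - a) * b * (M - b) / (M ^ 2 + 11))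

lemma slsInverseEntry_eq {M : K} (hM : M ≠ 0) (a b : K) :
    slsInverseEntry M a b =
      min a b - 1 / M * (a * b) - 3 / (M * (M ^ 2 + 11)) * (a * (M - a) * (b * (M - b))) := by
  have hmax_mul_min : max a b * min a b = a * b := by rw [mul_comm, min_mul_max]
  have hD : M ^ 2 + 11 ≠ 0 := by positivity
  unfold slsInverseEntry
  field_simp
  linear_combination (-(M ^ 2 + 11)) * hmax_mul_min

lemma sum_range_sum_range_slsInverseEntry (n : ℕ) :
    ∑ k ∈ range n, ∑ l ∈ range n, slsInverseEntry ((n : K) + 1) (k + 1) (l + 1) =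
      (n : K) * (n + 1) * (n + 2) / ((n + 1) ^ 2 + 11) := by
  have hM : (n : K) + 1 ≠ 0 := by positivity
  simp only [slsInverseEntry_eq hM, sum_sub_distrib, ← mul_sum, ← sum_mul,
    sum_range_sum_range_min_cast_add_one, sum_range_cast_add_one, sum_range_cast_add_one_mul_sub]
  field_simp
  ring

end LinearOrderedField

theorem sls_gamma_sum_general
    (M : ℕ)
    (H : Matrix (Fin (M - 1)) (Fin (M - 1)) ℝ)
    (hH : ∀ k l, H k l =
      (1 / (M : ℝ)) *
        (((M : ℝ) - ((max ((k : ℕ) + 1) ((l : ℕ) + 1) : ℕ) : ℝ)) *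
            ((min ((k : ℕ) + 1) ((l : ℕ) + 1) : ℕ) : ℝ) -
          3 * (((k : ℕ) + 1 : ℕ) : ℝ) * ((M : ℝ) - (((k : ℕ) + 1 : ℕ) : ℝ)) *
            (((l : ℕ) + 1 : ℕ) : ℝ) * ((M : ℝ) - (((l : ℕ) + 1 : ℕ) : ℝ)) /
            ((M : ℝ) ^ 2 + 11))) :
    ∑ k : Fin (M - 1), ∑ l : Fin (M - 1), H k l =
      ((M : ℝ) - 1) * (M : ℝ) * ((M : ℝ) + 1) / ((M : ℝ) ^ 2 + 11) := by
  obtain _ | n := M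
  · simp
  have hsum := sum_range_sum_range_slsInverseEntry (K := ℝ) n
  simp only [sum_range] at hsum
  push_cast [hH]
  rw [add_sub_cancel_right, add_assoc, one_add_one_eq_two]
  exact hsum

/-- The double-sum identity `γ(M) = 𝟙ᵀ G⁻¹ 𝟙 = (M−1)M(M+1)/(M²+11)` from the
single-source SLS-ESPRIT analysis (Appendix G of the paper), where `H = G⁻¹` is the
explicit inverse established in Lemma 4 of the paper. -/
theorem sls_gamma_sum
    (M : ℕ) (hM : 2 ≤ M)
    (H : Matrix (Fin (M - 1)) (Fin (M - 1)) ℝ)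
    (hH : ∀ k l, H k l =
      (1 / (M : ℝ)) *
        (((M : ℝ) - ((max ((k : ℕ) + 1) ((l : ℕ) + 1) : ℕ) : ℝ)) *
            ((min ((k : ℕ) + 1) ((l : ℕ) + 1) : ℕ) : ℝ) -
          3 * (((k : ℕ) + 1 : ℕ) : ℝ) * ((M : ℝ) - (((k : ℕ) + 1 : ℕ) : ℝ)) *
            (((l : ℕ) + 1 : ℕ) : ℝ) * ((M : ℝ) - (((l : ℕ) + 1 : ℕ) : ℝ)) /
            ((M : ℝ) ^ 2 + 11))) :
    ∑ k : Fin (M - 1), ∑ l : Fin (M - 1), H k l =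
      ((M : ℝ) - 1) * (M : ℝ) * ((M : ℝ) + 1) / ((M : ℝ) ^ 2 + 11) :=
  sls_gamma_sum_general M H hH
end

section
/- Let M ∈ ℕ with M ≥ 2, let H ∈ ℝ^{(M−1)×(M−1)} be the matrix with entries (for m₁, m₂ ∈ {1,…,M−1}) H_{m₁,m₂} = (1/M)·( (M − max(m₁,m₂))·min(m₁,m₂) − 3·m₁·(M−m₁)·m₂·(M−m₂)/(M²+11) ), and let J₁, J₂ ∈ ℝ^{(M−1)×M} be the maximum-overlap selection matrices with (J₁)_{k,m} = 1 if m = k and 0 otherwise, and (J₂)_{k,m} = 1 if m = k+1 and 0 otherwise (k = 0,…,M−2, m = 0,…,M−1). Then the row vector g_Dᵀ := 𝟙ᵀ·H·(J₂ − J₁) ∈ ℝ^{1×M} (𝟙 the all-ones vector of length M−1) has entries g_{D,m} = (6/(M²+11))·(2m − M − 1) for m = 1,…,M (1-based indexing of the M entries). -/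
open Matrix BigOperators
section SlsHelpers
open Finset

lemma sls_gauss (n : ℕ) : ∑ j ∈ Finset.range n, ((j:ℝ)+1) = n*(n+1)/2 := by
  induction n with
  | zero => simp
  | succ n ih => rw [Finset.sum_range_succ, ih]; push_cast; ring

lemma sls_sqsum (n : ℕ) : ∑ j ∈ Finset.range n, ((j:ℝ)+1)^2 = (n:ℝ)*((n:ℝ)+1)*(2*(n:ℝ)+1)/6 := by
  induction n with
  | zero => simp
  | succ n ih => rw [Finset.sum_range_succ, ih]; push_cast; ring

lemma sls_summin (a n : ℕ) (h : a ≤ n) :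
    ∑ j ∈ Finset.range n, ((min (j+1) a : ℕ):ℝ) = a*(a+1)/2 + a*((n:ℝ)-a) := by
  induction n, h using Nat.le_induction with
  | base =>
      have : ∑ j ∈ Finset.range a, ((min (j+1) a : ℕ):ℝ) = ∑ j ∈ Finset.range a, ((j:ℝ)+1) := by
        apply Finset.sum_congr rfl
        intro j hj
        have : j + 1 ≤ a := Finset.mem_range.mp hj
        rw [min_eq_left this]; push_cast; ring
      rw [this, sls_gauss]; ring
  | succ n hn ih =>
      rw [Finset.sum_range_succ, ih]
      have : min (n+1) a = a := min_eq_right (by omega)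
      rw [this]; push_cast; ring

lemma sls_colsum (n a : ℕ) (ha1 : 1 ≤ a) (ha2 : a ≤ n + 1) :
    ∑ j ∈ Finset.range (n+1),
      (1 / ((n:ℝ)+2)) *
        ((((n:ℝ)+2) - ((max (j+1) a : ℕ):ℝ)) * ((min (j+1) a : ℕ):ℝ) -
          3 * ((j:ℝ)+1) * (((n:ℝ)+2) - ((j:ℝ)+1)) * (a:ℝ) * (((n:ℝ)+2) - (a:ℝ)) /
            (((n:ℝ)+2)^2 + 11))
    = 6 * a * (((n:ℝ)+2) - a) / (((n:ℝ)+2)^2 + 11) := by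
  have hM0 : ((n:ℝ)+2) ≠ 0 := by positivity
  have hD0 : ((n:ℝ)+2)^2 + 11 ≠ 0 := by positivity
  have step : ∑ j ∈ Finset.range (n+1),
      (1 / ((n:ℝ)+2)) *
        ((((n:ℝ)+2) - ((max (j+1) a : ℕ):ℝ)) * ((min (j+1) a : ℕ):ℝ) -
          3 * ((j:ℝ)+1) * (((n:ℝ)+2) - ((j:ℝ)+1)) * (a:ℝ) * (((n:ℝ)+2) - (a:ℝ)) /
            (((n:ℝ)+2)^2 + 11))
      = ∑ j ∈ Finset.range (n+1),
        (((min (j+1) a : ℕ):ℝ)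
          + (-(a/((n:ℝ)+2)) - 3*a*(((n:ℝ)+2)-a)/(((n:ℝ)+2)^2+11)) * ((j:ℝ)+1)
          + (3*a*(((n:ℝ)+2)-a)/(((n:ℝ)+2)*(((n:ℝ)+2)^2+11))) * ((j:ℝ)+1)^2) := by
    apply Finset.sum_congr rfl
    intro j _
    have h2 : ((min (j+1) a : ℕ):ℝ) * ((max (j+1) a : ℕ):ℝ) = ((j:ℝ)+1) * a := by
      rw [← Nat.cast_mul, min_mul_max]; push_cast; ring
    have key : (((n:ℝ)+2) - ((max (j+1) a : ℕ):ℝ)) * ((min (j+1) a : ℕ):ℝ)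
        = ((n:ℝ)+2) * ((min (j+1) a : ℕ):ℝ) - ((j:ℝ)+1) * a := by
      rw [sub_mul, mul_comm ((max (j+1) a : ℕ):ℝ), h2]
    rw [key]
    field_simp
    ring
  rw [step, Finset.sum_add_distrib, Finset.sum_add_distrib, ← Finset.mul_sum, ← Finset.mul_sum,
    sls_summin a (n+1) ha2, sls_gauss, sls_sqsum]
  push_cast
  field_simp
  ring
end SlsHelpers


/-- Closed form of the vector `g_Dᵀ = 𝟙ᵀ G⁻¹ (J₂ − J₁)` from the single-source
SLS-ESPRIT analysis (Appendix G of the paper): its `m`-th entry (1-based) is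
`(6/(M²+11))(2m − M − 1)`. -/
theorem sls_gD_vector
    (M : ℕ) (hM : 2 ≤ M)
    (H : Matrix (Fin (M - 1)) (Fin (M - 1)) ℝ)
    (hH : ∀ k l, H k l =
      (1 / (M : ℝ)) *
        (((M : ℝ) - ((max ((k : ℕ) + 1) ((l : ℕ) + 1) : ℕ) : ℝ)) *
            ((min ((k : ℕ) + 1) ((l : ℕ) + 1) : ℕ) : ℝ) -
          3 * (((k : ℕ) + 1 : ℕ) : ℝ) * ((M : ℝ) - (((k : ℕ) + 1 : ℕ) : ℝ)) *
            (((l : ℕ) + 1 : ℕ) : ℝ) * ((M : ℝ) - (((l : ℕ) + 1 : ℕ) : ℝ)) /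
            ((M : ℝ) ^ 2 + 11)))
    (J1 J2 : Matrix (Fin (M - 1)) (Fin M) ℝ)
    (hJ1 : ∀ k m, J1 k m = if (m : ℕ) = (k : ℕ) then 1 else 0)
    (hJ2 : ∀ k m, J2 k m = if (m : ℕ) = (k : ℕ) + 1 then 1 else 0)
    (g : Fin M → ℝ)
    (hg : g = (fun _ => (1 : ℝ)) ᵥ* (H * (J2 - J1))) :
    ∀ m : Fin M, g m =
      (6 / ((M : ℝ) ^ 2 + 11)) * (2 * (((m : ℕ) + 1 : ℕ) : ℝ) - (M : ℝ) - 1) := by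
  obtain ⟨n, rfl⟩ : ∃ n, M = n + 2 := ⟨M - 2, by omega⟩
  intro m
  subst hg
  rw [← Matrix.vecMul_vecMul]
  have hcol : ∀ k : Fin (n+1), ((fun _ => (1:ℝ)) ᵥ* H) k
      = 6 * (((k:ℕ):ℝ)+1) * (((n:ℝ)+2) - (((k:ℕ):ℝ)+1)) / (((n:ℝ)+2)^2 + 11) := by
    intro k
    show ∑ j : Fin (n+1), 1 * H j k = _
    simp only [one_mul, hH]
    rw [Fin.sum_univ_eq_sum_range (fun j =>
      (1 / ((n+2 : ℕ) : ℝ)) *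
        ((((n+2 : ℕ) : ℝ) - ((max (j + 1) ((k : ℕ) + 1) : ℕ) : ℝ)) *
            ((min (j + 1) ((k : ℕ) + 1) : ℕ) : ℝ) -
          3 * ((j + 1 : ℕ) : ℝ) * (((n+2 : ℕ) : ℝ) - ((j + 1 : ℕ) : ℝ)) *
            (((k : ℕ) + 1 : ℕ) : ℝ) * (((n+2 : ℕ) : ℝ) - (((k : ℕ) + 1 : ℕ) : ℝ)) /
            (((n+2 : ℕ) : ℝ) ^ 2 + 11)) ) (n+1)]
    have h := sls_colsum n ((k:ℕ)+1) (Nat.le_add_left 1 _) k.isLt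
    push_cast at h ⊢
    exact h
  have hstep : (((fun _ => (1:ℝ)) ᵥ* H) ᵥ* (J2 - J1)) m
      = ∑ k ∈ Finset.range (n+1),
          (6 * ((k:ℝ)+1) * (((n:ℝ)+2) - ((k:ℝ)+1)) / (((n:ℝ)+2)^2 + 11)) *
            ((if (m:ℕ) = k+1 then (1:ℝ) else 0) - (if (m:ℕ) = k then (1:ℝ) else 0)) := by
    show ∑ k : Fin (n+1), ((fun _ => (1:ℝ)) ᵥ* H) k * (J2 - J1) k m = _
    simp only [hcol, Matrix.sub_apply, hJ1, hJ2]
    rw [Fin.sum_univ_eq_sum_range (fun k =>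
      (6 * ((k:ℝ)+1) * (((n:ℝ)+2) - ((k:ℝ)+1)) / (((n:ℝ)+2)^2 + 11)) *
        ((if (m:ℕ) = k+1 then (1:ℝ) else 0) - (if (m:ℕ) = k then (1:ℝ) else 0)) ) (n+1)]
  rw [hstep]
  have hm2 : (m:ℕ) < n + 2 := m.isLt
  have hRHS : ((((n:ℕ)+2 : ℕ) : ℝ)) = (n:ℝ)+2 := by push_cast; ring
  have hsplit : ∑ k ∈ Finset.range (n+1),
      (6 * ((k:ℝ)+1) * (((n:ℝ)+2) - ((k:ℝ)+1)) / (((n:ℝ)+2)^2 + 11)) *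
        ((if (m:ℕ) = k+1 then (1:ℝ) else 0) - (if (m:ℕ) = k then (1:ℝ) else 0))
      = (∑ k ∈ Finset.range (n+1),
          (if (m:ℕ) = k+1 then 6 * ((k:ℝ)+1) * (((n:ℝ)+2) - ((k:ℝ)+1)) / (((n:ℝ)+2)^2 + 11) else 0))
        - (∑ k ∈ Finset.range (n+1),
          (if (m:ℕ) = k then 6 * ((k:ℝ)+1) * (((n:ℝ)+2) - ((k:ℝ)+1)) / (((n:ℝ)+2)^2 + 11) else 0)) := by
    rw [← Finset.sum_sub_distrib]
    apply Finset.sum_congr rfl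
    intro k _
    split_ifs <;> ring
  rw [hsplit]
  rcases h0 : (m:ℕ) with _ | p
  · have hS1 : ∑ k ∈ Finset.range (n+1),
        (if 0 = k+1 then 6 * ((k:ℝ)+1) * (((n:ℝ)+2) - ((k:ℝ)+1)) / (((n:ℝ)+2)^2 + 11) else 0) = 0 := by
      apply Finset.sum_eq_zero
      intro k _
      simp
    rw [hS1, Finset.sum_ite_eq]
    simp only [Finset.mem_range, Nat.succ_pos, if_pos (Nat.succ_pos n)]
    push_cast
    have hD0 : ((n:ℝ)+2)^2 + 11 ≠ 0 := by positivity
    field_simp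
    ring
  · have hp1 : p < n + 1 := by omega
    have hS1 : ∑ k ∈ Finset.range (n+1),
        (if p + 1 = k+1 then 6 * ((k:ℝ)+1) * (((n:ℝ)+2) - ((k:ℝ)+1)) / (((n:ℝ)+2)^2 + 11) else 0)
        = 6 * ((p:ℝ)+1) * (((n:ℝ)+2) - ((p:ℝ)+1)) / (((n:ℝ)+2)^2 + 11) := by
      simp only [Nat.add_right_cancel_iff]
      rw [Finset.sum_ite_eq]
      simp [hp1]
    rw [hS1, Finset.sum_ite_eq]
    have hD0 : ((n:ℝ)+2)^2 + 11 ≠ 0 := by positivity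
    by_cases hpn : p + 1 < n + 1
    · simp only [Finset.mem_range, hpn, if_pos]
      push_cast
      field_simp
      ring
    · have hpe : p + 1 = n + 1 := by omega
      rw [if_neg (by simp [hpe])]
      have hpn' : (p:ℝ) = (n:ℝ) := by exact_mod_cast congrArg (Nat.cast : ℕ → ℝ) (by omega : p = n)
      push_cast
      rw [hpn']
      field_simp
      ring
end

section
/- Let M ∈ ℕ with M ≥ 2 and μ ∈ ℝ. Let a ∈ ℂ^M be the ULA steering vector with entries a_m = exp(i·m·μ) for m = 0,…,M−1, and let J₁, J₂ ∈ ℂ^{(M−1)×M} be the maximum-overlap selection matrices with (J₁)_{k,m} = 1 if m = k and 0 otherwise, and (J₂)_{k,m} = 1 if m = k+1 and 0 otherwise. Let D := diag(J₁·a) ∈ ℂ^{(M−1)×(M−1)} be the diagonal matrix with diagonal entries (J₁a)_k = e^{ikμ}, and let G ∈ ℝ^{(M−1)×(M−1)} have entries G_{k,l} = 1/M + 2·δ_{k,l} − δ_{k,l+1} − δ_{l,k+1}. Then (1/M)·(J₁·a)·(J₁·a)ᴴ + (e^{iμ}·J₁ − J₂)·(e^{iμ}·J₁ − J₂)ᴴ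 = D·G·Dᴴ. Equivalently, with the block matrix F_SLS := [ J₁·a/√M , e^{iμ}·J₁ − J₂ ] ∈ ℂ^{(M−1)×(1+M)}, one has F_SLS·F_SLSᴴ = D·G·Dᴴ. -/
open Matrix BigOperators

private lemma sum_ind {M : ℕ} (p q : ℕ) (hp : p < M) (x y : ℂ) :
    ∑ m : Fin M, (if (m : ℕ) = p then x else 0) * (if (m : ℕ) = q then y else 0)
      = if p = q then x * y else 0 := by
  rw [Finset.sum_eq_single (⟨p, hp⟩ : Fin M)]
  · by_cases h : p = q <;> simp [h]
  · intro b _ hb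
    have : (b : ℕ) ≠ p := fun h => hb (Fin.ext h)
    simp [this]
  · simp

/-- Factorization of the SLS Gram matrix for a single source (Appendix G of the
paper): `(1/M)(J₁a)(J₁a)ᴴ + (e^{iμ}J₁ − J₂)(e^{iμ}J₁ − J₂)ᴴ = D G Dᴴ` with
`D = diag(J₁a)`; equivalently `F_SLS F_SLSᴴ = D G Dᴴ` for the SLS coefficient block
matrix `F_SLS = [J₁a/√M , e^{iμ}J₁ − J₂]`. -/
theorem sls_gram_factorization
    (M : ℕ) (hM : 2 ≤ M) (μ : ℝ)
    (a : Fin M → ℂ)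
    (ha : ∀ m, a m = Complex.exp (Complex.I * ((m : ℕ) : ℂ) * (μ : ℂ)))
    (J1 J2 : Matrix (Fin (M - 1)) (Fin M) ℂ)
    (hJ1 : ∀ k m, J1 k m = if (m : ℕ) = (k : ℕ) then 1 else 0)
    (hJ2 : ∀ k m, J2 k m = if (m : ℕ) = (k : ℕ) + 1 then 1 else 0)
    (G : Matrix (Fin (M - 1)) (Fin (M - 1)) ℝ)
    (hG : ∀ k l, G k l =
      1 / (M : ℝ) + (if k = l then 2 else 0) -
        (if (k : ℕ) = (l : ℕ) + 1 then 1 else 0) -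
        (if (l : ℕ) = (k : ℕ) + 1 then 1 else 0))
    (D : Matrix (Fin (M - 1)) (Fin (M - 1)) ℂ)
    (hD : D = Matrix.diagonal (J1 *ᵥ a))
    (F : Matrix (Fin (M - 1)) (Unit ⊕ Fin M) ℂ)
    (hF1 : ∀ k u, F k (Sum.inl u) = (J1 *ᵥ a) k / ((Real.sqrt M : ℝ) : ℂ))
    (hF2 : ∀ k m, F k (Sum.inr m) =
      (Complex.exp (Complex.I * (μ : ℂ)) • J1 - J2) k m) :
    ((M : ℂ))⁻¹ • vecMulVec (J1 *ᵥ a) (star (J1 *ᵥ a)) +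
        (Complex.exp (Complex.I * (μ : ℂ)) • J1 - J2) *
          (Complex.exp (Complex.I * (μ : ℂ)) • J1 - J2)ᴴ =
      D * (G.map (fun x => (x : ℂ))) * Dᴴ ∧
    F * Fᴴ = D * (G.map (fun x => (x : ℂ))) * Dᴴ := by
  have hlt : ∀ k : Fin (M - 1), (k : ℕ) < M := fun k => by omega
  have hlt1 : ∀ k : Fin (M - 1), (k : ℕ) + 1 < M := fun k => by
    have := k.isLt; omega
  set eμ : ℂ := Complex.exp (Complex.I * (μ : ℂ)) with heμ
  have hconj : (starRingEnd ℂ) eμ = Complex.exp (-(Complex.I * (μ : ℂ))) := by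
    rw [heμ, ← Complex.exp_conj]
    congr 1
    rw [_root_.map_mul, Complex.conj_I, Complex.conj_ofReal]
    ring
  have hf : ∀ k : Fin (M - 1),
      (J1 *ᵥ a) k = Complex.exp (Complex.I * ((k : ℕ) : ℂ) * (μ : ℂ)) := by
    intro k
    simp only [mulVec, dotProduct, hJ1]
    rw [Finset.sum_eq_single (⟨(k : ℕ), hlt k⟩ : Fin M)]
    · simp [ha]
    · intro b _ hb
      have : (b : ℕ) ≠ (k : ℕ) := fun h => hb (Fin.ext h)
      simp [this]
    · simp
  have hconjf : ∀ k : Fin (M - 1),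
      (starRingEnd ℂ) ((J1 *ᵥ a) k) =
        Complex.exp (-(Complex.I * ((k : ℕ) : ℂ) * (μ : ℂ))) := by
    intro k
    rw [hf, ← Complex.exp_conj]
    congr 1
    rw [_root_.map_mul, _root_.map_mul, Complex.conj_I, Complex.conj_ofReal,
      Complex.conj_natCast]
    ring
  -- the E matrix entries
  have hE : ∀ (k : Fin (M - 1)) (m : Fin M),
      (eμ • J1 - J2) k m =
        (if (m : ℕ) = (k : ℕ) then eμ else 0) -
          (if (m : ℕ) = (k : ℕ) + 1 then 1 else 0) := by
    intro k m
    simp [hJ1, hJ2, mul_ite]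
  -- the cross-term sum
  have hsum : ∀ k l : Fin (M - 1),
      ∑ m : Fin M, (eμ • J1 - J2) k m * (starRingEnd ℂ) ((eμ • J1 - J2) l m) =
        (if k = l then 2 else 0) -
          (if (k : ℕ) = (l : ℕ) + 1 then eμ else 0) -
          (if (l : ℕ) = (k : ℕ) + 1 then (starRingEnd ℂ) eμ else 0) := by
    intro k l
    have expand : ∀ m : Fin M,
        (eμ • J1 - J2) k m * (starRingEnd ℂ) ((eμ • J1 - J2) l m) =
          ((if (m : ℕ) = (k : ℕ) then eμ else 0) *
            (if (m : ℕ) = (l : ℕ) then (starRingEnd ℂ) eμ else 0) +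
           (if (m : ℕ) = (k : ℕ) + 1 then (1:ℂ) else 0) *
            (if (m : ℕ) = (l : ℕ) + 1 then (1:ℂ) else 0)) -
          (if (m : ℕ) = (k : ℕ) then eμ else 0) *
            (if (m : ℕ) = (l : ℕ) + 1 then (1:ℂ) else 0) -
          (if (m : ℕ) = (k : ℕ) + 1 then (1:ℂ) else 0) *
            (if (m : ℕ) = (l : ℕ) then (starRingEnd ℂ) eμ else 0) := by
      intro m
      rw [hE, hE]
      rw [map_sub]
      rw [apply_ite (starRingEnd ℂ), apply_ite (starRingEnd ℂ)]
      simp only [map_zero, RingHom.map_one]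
      ring
    rw [Finset.sum_congr rfl (fun m _ => expand m)]
    rw [Finset.sum_sub_distrib, Finset.sum_sub_distrib, Finset.sum_add_distrib]
    rw [sum_ind _ _ (hlt k), sum_ind _ _ (hlt1 k), sum_ind _ _ (hlt k),
      sum_ind _ _ (hlt1 k)]
    have heμn : eμ * (starRingEnd ℂ) eμ = 1 := by
      rw [hconj, heμ, ← Complex.exp_add, add_neg_cancel, Complex.exp_zero]
    simp only [Fin.ext_iff]
    split_ifs <;> first | omega | linear_combination heμn | ring
  -- main entrywise equality
  have key : ((M : ℂ))⁻¹ • vecMulVec (J1 *ᵥ a) (star (J1 *ᵥ a)) +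
        (eμ • J1 - J2) * (eμ • J1 - J2)ᴴ =
      D * (G.map (fun x => (x : ℂ))) * Dᴴ := by
    ext k l
    have hprod : (J1 *ᵥ a) k * (starRingEnd ℂ) ((J1 *ᵥ a) l) =
        Complex.exp (Complex.I * (((k : ℕ) : ℂ) - ((l : ℕ) : ℂ)) * (μ : ℂ)) := by
      rw [hf, hconjf, ← Complex.exp_add]
      congr 1
      ring
    rw [hD, Matrix.diagonal_conjTranspose]
    have hR : (Matrix.diagonal (J1 *ᵥ a) * (G.map (fun x => (x : ℂ))) *
          Matrix.diagonal (star (J1 *ᵥ a))) k l =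
        (J1 *ᵥ a) k * (((G k l : ℝ)) : ℂ) * (starRingEnd ℂ) ((J1 *ᵥ a) l) := by
      rw [Matrix.mul_diagonal, Matrix.diagonal_mul]
      simp [Matrix.map_apply, Complex.star_def]
    rw [hR]
    simp only [Matrix.add_apply, Matrix.smul_apply, vecMulVec_apply,
      Pi.star_apply, Matrix.mul_apply, Matrix.conjTranspose_apply,
      smul_eq_mul, Complex.star_def]
    rw [hsum k l, hG]
    simp only [apply_ite (fun x : ℝ => (x : ℂ)), Complex.ofReal_sub,
      Complex.ofReal_add, Complex.ofReal_div, Complex.ofReal_one,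
      Complex.ofReal_ofNat, Complex.ofReal_zero, Complex.ofReal_natCast]
    simp only [Fin.ext_iff]
    by_cases h1 : (k : ℕ) = (l : ℕ)
    · have e1 : Complex.exp (Complex.I * (((k : ℕ) : ℂ) - ((l : ℕ) : ℂ)) * (μ : ℂ))
          = 1 := by
        have hc : ((k : ℕ) : ℂ) = ((l : ℕ) : ℂ) := by exact_mod_cast h1
        rw [hc, sub_self, mul_zero, zero_mul, Complex.exp_zero]
      simp only [h1, eq_self_iff_true, if_true,
        show ¬((l : ℕ) = (l : ℕ) + 1) by omega, if_false]
      linear_combination (-2 : ℂ) * hprod + (-2 : ℂ) * e1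
    · by_cases h2 : (k : ℕ) = (l : ℕ) + 1
      · have e2 : Complex.exp (Complex.I * (((k : ℕ) : ℂ) - ((l : ℕ) : ℂ)) * (μ : ℂ))
            = eμ := by
          rw [heμ]
          congr 1
          have hc : ((k : ℕ) : ℂ) = ((l : ℕ) : ℂ) + 1 := by exact_mod_cast h2
          rw [hc]; ring
        simp only [h2, show ¬((l : ℕ) + 1 = (l : ℕ)) by omega,
          show ¬((l : ℕ) = (l : ℕ) + 1 + 1) by omega, if_false, eq_self_iff_true,
          if_true]
        linear_combination hprod + e2
      · by_cases h3 : (l : ℕ) = (k : ℕ) + 1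
        · have e3 : Complex.exp (Complex.I * (((k : ℕ) : ℂ) - ((l : ℕ) : ℂ)) * (μ : ℂ))
              = (starRingEnd ℂ) eμ := by
            rw [hconj]
            congr 1
            have hc : ((l : ℕ) : ℂ) = ((k : ℕ) : ℂ) + 1 := by exact_mod_cast h3
            rw [hc]; ring
          simp only [h3, show ¬((k : ℕ) = (k : ℕ) + 1) by omega,
            show ¬((k : ℕ) = (k : ℕ) + 1 + 1) by omega, if_false, eq_self_iff_true,
            if_true]
          linear_combination hprod + e3
        · simp only [h1, h2, h3, if_false]
          ring
  refine ⟨key, ?_⟩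
  have hFF : F * Fᴴ = ((M : ℂ))⁻¹ • vecMulVec (J1 *ᵥ a) (star (J1 *ᵥ a)) +
      (eμ • J1 - J2) * (eμ • J1 - J2)ᴴ := by
    ext k l
    simp only [Matrix.mul_apply, Matrix.conjTranspose_apply, Fintype.sum_sum_type,
      Finset.univ_unique, Finset.sum_singleton, hF1, hF2,
      Matrix.add_apply, Matrix.smul_apply, vecMulVec_apply, Pi.star_apply, smul_eq_mul]
    congr 1
    rw [Complex.star_def, map_div₀, Complex.conj_ofReal, div_mul_div_comm]
    have hMs : ((Real.sqrt M : ℝ) : ℂ) * ((Real.sqrt M : ℝ) : ℂ) = (M : ℂ) := by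
      rw [← Complex.ofReal_mul, Real.mul_self_sqrt (Nat.cast_nonneg M)]
      exact Complex.ofReal_natCast M
    rw [hMs, div_eq_inv_mul]
  rw [hFF, key]
end

section
/- Let M ∈ ℕ with M ≥ 2, μ ∈ ℝ, N ≥ 1, let s ∈ ℂ^N be nonzero and let σ ∈ ℝ. Let a ∈ ℂ^M be the ULA steering vector with entries a_m = exp(i·m·μ) for m = 0,…,M−1, and let J₁, J₂ ∈ ℂ^{(M−1)×M} be the maximum-overlap selection matrices with (J₁)_{k,m} = 1 if m = k and 0 otherwise, and (J₂)_{k,m} = 1 if m = k+1 and 0 otherwise. Set γ := (M−1)·M·(M+1)/(M²+11) and let g ∈ ℝ^M have entries g_m = (6/(M²+11))·(2m − M − 1) for m = 1,…,M (1-based indexing). Define the row vector r_SLSᵀ := √M·( (1 − γ/M)·((J₁·a)ᴴ/(M−1))·(e^{−iμ}·J₂ − J₁) + (1/M)·gᵀ·diag(a)ᴴ ) ∈ ℂ^{1×M} and ã_SLSᵀ := r_SLSᵀ·(I_M − (1/M)·a·aᴴ). Then ‖ã_SLS‖² = 12·(M⁴ − 2M³ + 24M² − 22M + 23)/((M²+11)²·(M−1)²).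 Consequently the first-order mean square error of 1-D SLS-based Standard ESPRIT for a single source, (σ²/2)·(1/(M·‖s‖²))·‖ã_SLS‖², equals (6·σ²/‖s‖²)·(M⁴ − 2M³ + 24M² − 22M + 23)/(M·(M²+11)²·(M−1)²), i.e. (6/ρ̂)·(M⁴ − 2M³ + 24M² − 22M + 23)/(M·(M²+11)²·(M−1)²) with effective SNR ρ̂ := ‖s‖²/σ². -/
open Matrix BigOperators

private lemma sls_sum_id (n : ℕ) : ∑ j ∈ Finset.range n, ((j:ℝ)) = n*(n-1)/2 := by
  induction n with
  | zero => simp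
  | succ k ih => rw [Finset.sum_range_succ, ih]; push_cast; ring

private lemma sls_sum_sq (n : ℕ) : ∑ j ∈ Finset.range n, ((j:ℝ))^2 = n*(n-1)*(2*n-1)/6 := by
  induction n with
  | zero => simp
  | succ k ih => rw [Finset.sum_range_succ, ih]; push_cast; ring

private lemma sls_alg (x S Mr A P Q : ℝ) (hS : S ≠ 0) (hMr : Mr ≠ 0)
    (hP : P ≠ 0) (hQ : Q ≠ 0) :
    x ^ 2 / 2 * (1 / (Mr * S)) * (12 * A / (P ^ 2 * Q ^ 2))
      = 6 * x ^ 2 / S * (A / (Mr * P ^ 2 * Q ^ 2)) := by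
  field_simp
  ring

private lemma sls_T_formula
    (M : ℕ) (hM : 2 ≤ M) (μ : ℝ)
    (a : Fin M → ℂ)
    (ha : ∀ m, a m = Complex.exp (Complex.I * ((m : ℕ) : ℂ) * (μ : ℂ)))
    (J1 J2 : Matrix (Fin (M - 1)) (Fin M) ℂ)
    (hJ1 : ∀ k m, J1 k m = if (m : ℕ) = (k : ℕ) then 1 else 0)
    (hJ2 : ∀ k m, J2 k m = if (m : ℕ) = (k : ℕ) + 1 then 1 else 0) :
    ∀ m : Fin M, (star (J1 *ᵥ a) ᵥ* (Complex.exp (-(Complex.I * (μ : ℂ))) • J2 - J1)) m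
      = (starRingEnd ℂ) (a m) *
        ((if (m : ℕ) = M - 1 then 1 else 0) - (if (m : ℕ) = 0 then 1 else 0)) := by
  have hJ1a : ∀ k : Fin (M-1), (J1 *ᵥ a) k = a (Fin.castLE (Nat.sub_le M 1) k) := by
    intro k
    simp only [mulVec, dotProduct, hJ1]
    rw [Finset.sum_eq_single (Fin.castLE (Nat.sub_le M 1) k)]
    · simp
    · intro j _ hj
      rw [if_neg, zero_mul]
      intro h; exact hj (Fin.ext (by simpa using h))
    · simp
  intro m
  have hterm : ∀ k : Fin (M-1),
      star ((J1 *ᵥ a) k) * ((Complex.exp (-(Complex.I * (μ : ℂ))) • J2 - J1) k m)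
      = (starRingEnd ℂ) (a m) *
        ((if (m : ℕ) = (k : ℕ) + 1 then 1 else 0) - (if (m : ℕ) = (k : ℕ) then 1 else 0)) := by
    intro k
    rw [hJ1a]
    simp only [Matrix.sub_apply, Matrix.smul_apply, hJ1, hJ2, smul_eq_mul, Complex.star_def]
    by_cases h1 : (m : ℕ) = (k : ℕ) + 1
    · have h2 : ¬ ((m:ℕ) = (k:ℕ)) := by omega
      rw [if_pos h1, if_neg h2]
      have : (starRingEnd ℂ) (a (Fin.castLE (Nat.sub_le M 1) k)) * Complex.exp (-(Complex.I * (μ : ℂ)))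
          = (starRingEnd ℂ) (a m) := by
        rw [ha, ha, ← Complex.exp_conj, ← Complex.exp_conj, ← Complex.exp_add]
        congr 1
        simp only [_root_.map_mul, Complex.conj_I, Complex.conj_ofReal, map_natCast]
        rw [Fin.coe_castLE, h1]
        push_cast
        ring
      simp only [mul_one, sub_zero]
      exact this
    · rw [if_neg h1]
      by_cases h2 : (m : ℕ) = (k : ℕ)
      · rw [if_pos h2]
        have : a (Fin.castLE (Nat.sub_le M 1) k) = a m := by
          congr 1; exact Fin.ext (by simpa using h2.symm)
        rw [this]; ring
      · rw [if_neg h2]; ring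
  calc (star (J1 *ᵥ a) ᵥ* (Complex.exp (-(Complex.I * (μ : ℂ))) • J2 - J1)) m
      = ∑ k : Fin (M-1), star ((J1 *ᵥ a) k) * ((Complex.exp (-(Complex.I * (μ : ℂ))) • J2 - J1) k m) := by
        simp [vecMul, dotProduct]
    _ = ∑ k : Fin (M-1), (starRingEnd ℂ) (a m) *
        ((if (m : ℕ) = (k : ℕ) + 1 then 1 else 0) - (if (m : ℕ) = (k : ℕ) then 1 else 0)) := by
        exact Finset.sum_congr rfl fun k _ => hterm k
    _ = (starRingEnd ℂ) (a m) *
        ((∑ k : Fin (M-1), if (m : ℕ) = (k : ℕ) + 1 then 1 else 0) -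
         (∑ k : Fin (M-1), if (m : ℕ) = (k : ℕ) then 1 else 0)) := by
        rw [← Finset.mul_sum, Finset.sum_sub_distrib]
    _ = (starRingEnd ℂ) (a m) *
        ((if (m : ℕ) = M - 1 then 1 else 0) - (if (m : ℕ) = 0 then 1 else 0)) := by
        congr 1
        have e1 : (∑ k : Fin (M-1), if (m : ℕ) = (k : ℕ) + 1 then (1:ℂ) else 0)
            = ∑ k ∈ Finset.range (M-1), if (m : ℕ) = k + 1 then (1:ℂ) else 0 :=
          Fin.sum_univ_eq_sum_range (fun j => if (m:ℕ) = j + 1 then (1:ℂ) else 0) (M-1)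
        have e2 : (∑ k : Fin (M-1), if (m : ℕ) = (k : ℕ) then (1:ℂ) else 0)
            = ∑ k ∈ Finset.range (M-1), if (m : ℕ) = k then (1:ℂ) else 0 :=
          Fin.sum_univ_eq_sum_range (fun j => if (m:ℕ) = j then (1:ℂ) else 0) (M-1)
        rw [e1, e2, Finset.sum_ite_eq]
        simp only [Finset.mem_range]
        have hmlt : (m : ℕ) < M := m.2
        rcases Nat.eq_zero_or_pos (m : ℕ) with h0 | h0
        · have hz : ∀ k ∈ Finset.range (M-1), (if (m : ℕ) = k + 1 then (1:ℂ) else 0) = 0 := by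
            intro k _; rw [if_neg]; omega
          rw [Finset.sum_congr rfl hz, Finset.sum_const_zero,
            if_pos (show (m:ℕ) < M - 1 by omega), if_neg (show ¬ (m:ℕ) = M - 1 by omega),
            if_pos h0]
        · have hm0 : ¬ ((m:ℕ) = 0) := by omega
          have hiff : ∀ k : ℕ, ((m : ℕ) = k + 1) = ((m:ℕ) - 1 = k) := by
            intro k; apply propext; omega
          simp_rw [hiff]
          rw [Finset.sum_ite_eq]
          simp only [Finset.mem_range]
          rw [if_neg hm0]
          by_cases hml : (m : ℕ) = M - 1
          · rw [if_pos (by omega : (m:ℕ) - 1 < M - 1), if_neg (show ¬ (m:ℕ) < M-1 by omega),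
              if_pos hml]
          · rw [if_pos (by omega : (m:ℕ) - 1 < M - 1), if_pos (show (m:ℕ) < M-1 by omega),
              if_neg hml]
            ring

set_option maxHeartbeats 1600000 in
/-- Mean square error statement of Theorem 6 (Appendix F) of the paper: for a single
source on an `M`-element ULA, the SLS-ESPRIT error vector satisfies
`‖ã_SLS‖² = 12(M⁴−2M³+24M²−22M+23)/((M²+11)²(M−1)²)`, and consequently the first-order
MSE `(σ²/2)·(1/(M‖s‖²))·‖ã_SLS‖²` equals
`(6/ρ̂)·(M⁴−2M³+24M²−22M+23)/(M(M²+11)²(M−1)²)` with `ρ̂ = ‖s‖²/σ²`. -/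
theorem single_source_sls_esprit_mse
    (M : ℕ) (hM : 2 ≤ M) (μ : ℝ)
    (N : ℕ) (hN : 1 ≤ N) (s : Fin N → ℂ) (hs : s ≠ 0) (σ : ℝ)
    (a : Fin M → ℂ)
    (ha : ∀ m, a m = Complex.exp (Complex.I * ((m : ℕ) : ℂ) * (μ : ℂ)))
    (J1 J2 : Matrix (Fin (M - 1)) (Fin M) ℂ)
    (hJ1 : ∀ k m, J1 k m = if (m : ℕ) = (k : ℕ) then 1 else 0)
    (hJ2 : ∀ k m, J2 k m = if (m : ℕ) = (k : ℕ) + 1 then 1 else 0)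
    (γ : ℝ) (hγ : γ = ((M : ℝ) - 1) * (M : ℝ) * ((M : ℝ) + 1) / ((M : ℝ) ^ 2 + 11))
    (g : Fin M → ℝ)
    (hg : ∀ m, g m =
      (6 / ((M : ℝ) ^ 2 + 11)) * (2 * (((m : ℕ) + 1 : ℕ) : ℝ) - (M : ℝ) - 1))
    (rSLS : Fin M → ℂ)
    (hr : ∀ m, rSLS m = ((Real.sqrt M : ℝ) : ℂ) *
      (((1 - γ / (M : ℝ) : ℝ) : ℂ) *
          ((star (J1 *ᵥ a) ᵥ* (Complex.exp (-(Complex.I * (μ : ℂ))) • J2 - J1)) m /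
            (((M : ℝ) - 1 : ℝ) : ℂ)) +
        ((M : ℂ))⁻¹ * ((g m : ℝ) : ℂ) * (starRingEnd ℂ) (a m)))
    (atildeSLS : Fin M → ℂ)
    (hat : atildeSLS = rSLS ᵥ*
      ((1 : Matrix (Fin M) (Fin M) ℂ) - ((M : ℂ))⁻¹ • vecMulVec a (star a))) :
    ∑ m, ‖atildeSLS m‖ ^ 2 =
      12 * ((M : ℝ) ^ 4 - 2 * (M : ℝ) ^ 3 + 24 * (M : ℝ) ^ 2 - 22 * (M : ℝ) + 23) /
        (((M : ℝ) ^ 2 + 11) ^ 2 * ((M : ℝ) - 1) ^ 2) ∧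
    (σ ^ 2 / 2) * (1 / ((M : ℝ) * (∑ i, ‖s i‖ ^ 2))) * (∑ m, ‖atildeSLS m‖ ^ 2) =
      (6 * σ ^ 2 / (∑ i, ‖s i‖ ^ 2)) *
        (((M : ℝ) ^ 4 - 2 * (M : ℝ) ^ 3 + 24 * (M : ℝ) ^ 2 - 22 * (M : ℝ) + 23) /
          ((M : ℝ) * ((M : ℝ) ^ 2 + 11) ^ 2 * ((M : ℝ) - 1) ^ 2)) := by
  -- basic nonvanishing facts
  have hMR : (2:ℝ) ≤ (M:ℝ) := by exact_mod_cast hM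
  have hM0 : (M:ℝ) ≠ 0 := by linarith
  have hM1 : (M:ℝ) - 1 ≠ 0 := by intro h; linarith [h]
  have hD : ((M:ℝ)^2 + 11) ≠ 0 := by positivity
  have hM0c : ((M:ℝ):ℂ) ≠ 0 := Complex.ofReal_ne_zero.mpr hM0
  have hM1c : (((M:ℝ) - 1 : ℝ):ℂ) ≠ 0 := Complex.ofReal_ne_zero.mpr hM1
  have hDc : (((M:ℝ)^2 + 11 : ℝ):ℂ) ≠ 0 := Complex.ofReal_ne_zero.mpr hD
  set β : ℝ := 12 / (((M:ℝ)^2 + 11) * ((M:ℝ) - 1)) with hβ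
  set c : Fin M → ℝ := fun m =>
    (if (m:ℕ) = M - 1 then β else 0) - (if (m:ℕ) = 0 then β else 0) + g m / (M:ℝ)
    with hcdef
  have hT := sls_T_formula M hM μ a ha J1 J2 hJ1 hJ2
  -- closed form of rSLS
  have hca : ∀ m, rSLS m
      = ((Real.sqrt M : ℝ):ℂ) * (starRingEnd ℂ) (a m) * ((c m : ℝ) : ℂ) := by
    intro m
    rw [hr, hT m]
    have hgc : (1 - γ / (M:ℝ)) = 12 / ((M:ℝ)^2 + 11) := by
      rw [hγ]; field_simp; ring
    rw [hgc]
    simp only [hcdef, hβ]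
    push_cast [apply_ite (fun x : ℝ => (x:ℂ))]
    split_ifs with h1 h2 h2 <;> field_simp <;> ring
  -- unit modulus of steering entries
  have hnormA : ∀ m : Fin M, (starRingEnd ℂ) (a m) * a m = 1 := by
    intro m
    rw [ha, ← Complex.exp_conj, ← Complex.exp_add]
    have : (starRingEnd ℂ) (Complex.I * ((m:ℕ):ℂ) * (μ:ℂ)) + Complex.I * ((m:ℕ):ℂ) * (μ:ℂ) = 0 := by
      simp only [_root_.map_mul, Complex.conj_I, Complex.conj_ofReal, map_natCast]; ring
    rw [this, Complex.exp_zero]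
  have hnorm1 : ∀ m : Fin M, ‖a m‖ = 1 := by
    intro m
    rw [ha, show Complex.I * ((m:ℕ):ℂ) * (μ:ℂ) = ((((m:ℕ):ℝ) * μ : ℝ):ℂ) * Complex.I by
      push_cast; ring]
    exact Complex.norm_exp_ofReal_mul_I _
  -- index repackaging for the two special entries
  have hcond1 : ∀ m : Fin M, ((m:ℕ) = M - 1) = (m = (⟨M-1, by omega⟩ : Fin M)) := by
    intro m; apply propext
    exact ⟨fun h => Fin.ext h, fun h => by rw [h]⟩
  have hcond0 : ∀ m : Fin M, ((m:ℕ) = 0) = (m = (⟨0, by omega⟩ : Fin M)) := by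
    intro m; apply propext
    exact ⟨fun h => Fin.ext h, fun h => by rw [h]⟩
  -- sum of c vanishes
  have hgsum : ∑ m : Fin M, g m / (M:ℝ) = 0 := by
    have e : ∑ m : Fin M, g m / (M:ℝ)
        = ∑ j ∈ Finset.range M, ((6 / ((M : ℝ)^2 + 11)) * (2 * ((j:ℝ)+1) - (M:ℝ) - 1) / (M:ℝ)) := by
      rw [← Fin.sum_univ_eq_sum_range
        (fun j => (6 / ((M : ℝ)^2 + 11)) * (2 * ((j:ℝ)+1) - (M:ℝ) - 1) / (M:ℝ)) M]
      refine Finset.sum_congr rfl fun m _ => ?_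
      rw [hg]; push_cast; ring
    have e2 : ∀ j : ℕ, (6 / ((M : ℝ)^2 + 11)) * (2 * ((j:ℝ)+1) - (M:ℝ) - 1) / (M:ℝ)
        = (6 / (((M : ℝ)^2 + 11)*(M:ℝ))) * (2*(j:ℝ)) + (6 / (((M : ℝ)^2 + 11)*(M:ℝ))) * (1-(M:ℝ)) := by
      intro j; field_simp; ring
    rw [e, Finset.sum_congr rfl (fun j _ => e2 j), Finset.sum_add_distrib,
      ← Finset.mul_sum, ← Finset.mul_sum, Finset.sum_const, Finset.card_range,
      sls_sum_id M, nsmul_eq_mul]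
    field_simp
    ring
  have hsumc : ∑ m : Fin M, c m = 0 := by
    simp only [hcdef]
    rw [Finset.sum_add_distrib, Finset.sum_sub_distrib, hgsum]
    simp only [hcond1, hcond0]
    rw [Finset.sum_ite_eq' Finset.univ (⟨M-1, by omega⟩ : Fin M) (fun _ => β),
      Finset.sum_ite_eq' Finset.univ (⟨0, by omega⟩ : Fin M) (fun _ => β)]
    simp
  -- the projection annihilates rSLS
  have hzero : ∑ k : Fin M, rSLS k * a k = 0 := by
    have e : ∀ k : Fin M, rSLS k * a k = ((Real.sqrt M : ℝ):ℂ) * ((c k : ℝ):ℂ) := by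
      intro k
      rw [hca k]
      have : ((Real.sqrt M : ℝ):ℂ) * (starRingEnd ℂ) (a k) * ((c k : ℝ):ℂ) * a k
          = ((Real.sqrt M : ℝ):ℂ) * ((c k : ℝ):ℂ) * ((starRingEnd ℂ) (a k) * a k) := by ring
      rw [this, hnormA k, mul_one]
    rw [Finset.sum_congr rfl fun k _ => e k, ← Finset.mul_sum, ← Complex.ofReal_sum,
      hsumc]
    simp
  have hat' : ∀ m, atildeSLS m = rSLS m := by
    intro m
    rw [hat]
    simp only [vecMul, dotProduct, Matrix.sub_apply, Matrix.one_apply, Matrix.smul_apply,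
      vecMulVec_apply, Pi.star_apply, smul_eq_mul, mul_sub]
    rw [Finset.sum_sub_distrib]
    have h1 : ∑ k : Fin M, rSLS k * (if k = m then (1:ℂ) else 0) = rSLS m := by
      simp_rw [mul_ite, mul_one, mul_zero]
      rw [Finset.sum_ite_eq' Finset.univ m rSLS]
      simp
    have h2 : ∑ k : Fin M, rSLS k * ((M:ℂ)⁻¹ * (a k * star (a m))) = 0 := by
      have e : ∀ k : Fin M, rSLS k * ((M:ℂ)⁻¹ * (a k * star (a m)))
          = (M:ℂ)⁻¹ * star (a m) * (rSLS k * a k) := by intro k; ring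
      rw [Finset.sum_congr rfl fun k _ => e k, ← Finset.mul_sum, hzero, mul_zero]
    rw [h1, h2, sub_zero]
  -- pointwise squared norm
  have hnr : ∀ m, ‖atildeSLS m‖ ^ 2 = (M:ℝ) * (c m)^2 := by
    intro m
    rw [hat' m, hca m, norm_mul, norm_mul]
    rw [Complex.norm_real, Complex.norm_real, RCLike.norm_conj, hnorm1 m]
    rw [Real.norm_eq_abs, Real.norm_eq_abs, abs_of_nonneg (Real.sqrt_nonneg _)]
    rw [mul_pow, mul_pow, Real.sq_sqrt (by positivity : (0:ℝ) ≤ (M:ℝ))]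
    rw [sq_abs, one_pow, mul_one]
  -- the value of g at the two special entries
  have hg1 : g (⟨M-1, by omega⟩ : Fin M) = (6 / ((M:ℝ)^2 + 11)) * ((M:ℝ) - 1) := by
    rw [hg]
    simp only []
    rw [show ((M - 1 : ℕ) + 1 : ℕ) = M by omega]
    push_cast
    ring
  have hg0 : g (⟨0, by omega⟩ : Fin M) = (6 / ((M:ℝ)^2 + 11)) * (1 - (M:ℝ)) := by
    rw [hg]
    push_cast
    ring
  -- sum of squares of g/M
  have hgsq : ∑ m : Fin M, (g m / (M:ℝ))^2
      = 12 * ((M:ℝ)^2 - 1) / (((M:ℝ)^2+11)^2 * (M:ℝ)) := by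
    have e : ∑ m : Fin M, (g m / (M:ℝ))^2
        = ∑ j ∈ Finset.range M, ((6 / ((M : ℝ)^2 + 11)) * (2 * ((j:ℝ)+1) - (M:ℝ) - 1) / (M:ℝ))^2 := by
      rw [← Fin.sum_univ_eq_sum_range
        (fun j => ((6 / ((M : ℝ)^2 + 11)) * (2 * ((j:ℝ)+1) - (M:ℝ) - 1) / (M:ℝ))^2) M]
      refine Finset.sum_congr rfl fun m _ => ?_
      rw [hg]; push_cast; ring
    have e2 : ∀ j : ℕ, ((6 / ((M : ℝ)^2 + 11)) * (2 * ((j:ℝ)+1) - (M:ℝ) - 1) / (M:ℝ))^2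
        = (6 / (((M : ℝ)^2 + 11)*(M:ℝ)))^2 * 4 * (j:ℝ)^2
          + ((6 / (((M : ℝ)^2 + 11)*(M:ℝ)))^2 * (4*(1-(M:ℝ)))) * (j:ℝ)
          + (6 / (((M : ℝ)^2 + 11)*(M:ℝ)))^2 * (1-(M:ℝ))^2 := by
      intro j; field_simp; ring
    rw [e, Finset.sum_congr rfl (fun j _ => e2 j), Finset.sum_add_distrib,
      Finset.sum_add_distrib, Finset.sum_const, Finset.card_range, nsmul_eq_mul]
    rw [← Finset.mul_sum, ← Finset.mul_sum, sls_sum_id M, sls_sum_sq M]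
    have h4 : (6 / (((M : ℝ)^2 + 11)*(M:ℝ)))^2 * 4 * ((M:ℝ)*((M:ℝ)-1)*(2*(M:ℝ)-1)/6)
          + (6 / (((M : ℝ)^2 + 11)*(M:ℝ)))^2 * (4*(1-(M:ℝ))) * ((M:ℝ)*((M:ℝ)-1)/2)
          + (M:ℝ) * ((6 / (((M : ℝ)^2 + 11)*(M:ℝ)))^2 * (1-(M:ℝ))^2)
        = 12 * ((M:ℝ)^2 - 1) / (((M:ℝ)^2+11)^2 * (M:ℝ)) := by
      field_simp
      ring
    linarith [h4]
  -- decompose c m ^ 2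
  have hm10 : (⟨M-1, by omega⟩ : Fin M) ≠ (⟨0, by omega⟩ : Fin M) :=
    Fin.ne_of_val_ne (by simp; omega)
  have hcsq : ∀ m : Fin M, (c m)^2
      = (g m / (M:ℝ))^2
        + (if m = (⟨M-1, by omega⟩ : Fin M) then 2*β*(g m / (M:ℝ)) + β^2 else 0)
        + (if m = (⟨0, by omega⟩ : Fin M) then -(2*β*(g m / (M:ℝ))) + β^2 else 0) := by
    intro m
    simp only [hcdef, hcond1, hcond0]
    split_ifs with h1 h2 h2
    · exact absurd (h1.symm.trans h2) hm10
    · ring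
    · ring
    · ring
  have hsumsq : ∑ m : Fin M, (c m)^2
      = 12 * ((M:ℝ)^2 - 1) / (((M:ℝ)^2+11)^2 * (M:ℝ))
        + (2*β*((6 / ((M:ℝ)^2 + 11)) * ((M:ℝ) - 1) / (M:ℝ)) + β^2)
        + (-(2*β*((6 / ((M:ℝ)^2 + 11)) * (1 - (M:ℝ)) / (M:ℝ))) + β^2) := by
    rw [Finset.sum_congr rfl fun m _ => hcsq m, Finset.sum_add_distrib,
      Finset.sum_add_distrib, hgsq,
      Finset.sum_ite_eq' Finset.univ (⟨M-1, by omega⟩ : Fin M)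
        (fun m => 2*β*(g m / (M:ℝ)) + β^2),
      Finset.sum_ite_eq' Finset.univ (⟨0, by omega⟩ : Fin M)
        (fun m => -(2*β*(g m / (M:ℝ))) + β^2)]
    simp only [Finset.mem_univ, if_pos, hg1, hg0]
  -- the first conjunct
  have key : ∑ m, ‖atildeSLS m‖ ^ 2 =
      12 * ((M : ℝ) ^ 4 - 2 * (M : ℝ) ^ 3 + 24 * (M : ℝ) ^ 2 - 22 * (M : ℝ) + 23) /
        (((M : ℝ) ^ 2 + 11) ^ 2 * ((M : ℝ) - 1) ^ 2) := by
    rw [Finset.sum_congr rfl fun m _ => hnr m, ← Finset.mul_sum, hsumsq, hβ]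
    field_simp
    ring
  refine ⟨key, ?_⟩
  have hspos : 0 < ∑ i, ‖s i‖ ^ 2 := by
    obtain ⟨i, hi⟩ := Function.ne_iff.mp hs
    refine Finset.sum_pos' (fun j _ => by positivity) ⟨i, Finset.mem_univ i, ?_⟩
    have : ‖s i‖ ≠ 0 := norm_ne_zero_iff.mpr hi
    positivity
  have hs0 : (∑ i, ‖s i‖ ^ 2) ≠ 0 := ne_of_gt hspos
  rw [key]
  exact sls_alg σ _ _ _ _ _ hs0 hM0 hD hM1
end

section
/- For M ∈ ℕ with M ≥ 2, define the asymptotic efficiency of SLS-based 1-D Standard ESPRIT for a single source as η_SLS(M) := (6/(M·(M²−1))) / ( 6·(M⁴ − 2M³ + 24M² − 22M + 23)/(M·(M²+11)²·(M−1)²) ) = (M²+11)²·(M−1)/((M+1)·(M⁴ − 2M³ + 24M² − 22M + 23)) = (M⁵ − M⁴ + 22M³ − 22M² + 121M − 121)/(M⁵ − M⁴ + 22M³ + 2M² + M + 23). Then: (i) η_SLS(2) = 1 and η_SLS(3) = 1; (ii) η_SLS(M) ≥ 36/37 for all M ≥ 2, with equality when M = 5; and (iii) η_SLS(M) → 1 as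 M → ∞. -/
/-!
Writing `q(M) = M⁴ - 2M³ + 24M² - 22M + 23`, the efficiency is `(M² + 11)²(M - 1) / ((M + 1) q(M))`,
and numerator and denominator differ by exactly `24 (M - 2)(M - 3)`. Hence
`1 - η(M) = 24 (M - 2)(M - 3) / ((M + 1) q(M))` with `q > 0`: it vanishes at `M = 2, 3` and is
`O(1/M)` at infinity. The bound `η ≥ 36/37` becomes the polynomial inequality
`888 (M - 2)(M - 3) ≤ (M + 1) q(M)`, which is an equality at `M = 5` and holds with room for `M ≥ 6`;
it fails on the reals just above `5`, so `M = 2, …, 5` are checked directly.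
-/

open Filter Topology

noncomputable section

def slsQuartic (x : ℝ) : ℝ := x ^ 4 - 2 * x ^ 3 + 24 * x ^ 2 - 22 * x + 23

def slsEfficiency (x : ℝ) : ℝ := (x ^ 2 + 11) ^ 2 * (x - 1) / ((x + 1) * slsQuartic x)

end

lemma slsQuartic_pos (x : ℝ) : 0 < slsQuartic x := by
  have : slsQuartic x = (x * (x - 1)) ^ 2 + 23 * (x - 11 / 23) ^ 2 + 408 / 23 := by
    unfold slsQuartic; ring
  rw [this]; positivity

lemma sq_lt_slsQuartic (x : ℝ) : x ^ 2 < slsQuartic x := by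
  have : slsQuartic x - x ^ 2 = (x * (x - 1)) ^ 2 + 22 * (x - 1 / 2) ^ 2 + 35 / 2 := by
    unfold slsQuartic; ring
  rw [← sub_pos, this]; positivity

lemma crb_div_mse_eq_slsEfficiency {x : ℝ} (hx : x ≠ 0) :
    6 / (x * (x ^ 2 - 1)) / (6 * slsQuartic x / (x * (x ^ 2 + 11) ^ 2 * (x - 1) ^ 2)) =
      slsEfficiency x := by
  have hq := (slsQuartic_pos x).ne'
  -- at `x = ±1` both sides are `0`, through the convention `a / 0 = 0`
  rcases eq_or_ne x 1 with rfl | h1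
  · simp [slsEfficiency]
  rcases eq_or_ne x (-1) with rfl | h2
  · simp [slsEfficiency]
  have h1' : x - 1 ≠ 0 := sub_ne_zero.mpr h1
  have h2' : x + 1 ≠ 0 := by intro h; exact h2 (by linarith)
  have h3 : x ^ 2 - 1 ≠ 0 := by
    rw [show x ^ 2 - 1 = (x - 1) * (x + 1) by ring]; exact mul_ne_zero h1' h2'
  unfold slsEfficiency
  field_simp
  ring

lemma slsEfficiency_eq_expanded (x : ℝ) :
    slsEfficiency x = (x ^ 5 - x ^ 4 + 22 * x ^ 3 - 22 * x ^ 2 + 121 * x - 121) /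
      (x ^ 5 - x ^ 4 + 22 * x ^ 3 + 2 * x ^ 2 + x + 23) := by
  unfold slsEfficiency slsQuartic
  congr 1 <;> ring

lemma slsEfficiency_eq_one_sub {x : ℝ} (hx : x ≠ -1) :
    slsEfficiency x = 1 - 24 * (x - 2) * (x - 3) / ((x + 1) * slsQuartic x) := by
  have hx' : x + 1 ≠ 0 := by intro h; exact hx (by linarith)
  have hq := (slsQuartic_pos x).ne'
  unfold slsEfficiency
  field_simp
  unfold slsQuartic
  ring

lemma slsEfficiency_two : slsEfficiency 2 = 1 := by norm_num [slsEfficiency, slsQuartic]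

lemma slsEfficiency_three : slsEfficiency 3 = 1 := by norm_num [slsEfficiency, slsQuartic]

lemma slsEfficiency_five : slsEfficiency 5 = 36 / 37 := by norm_num [slsEfficiency, slsQuartic]

lemma le_slsEfficiency_of_six_le {x : ℝ} (hx : 6 ≤ x) : 36 / 37 ≤ slsEfficiency x := by
  rw [slsEfficiency, le_div_iff₀ (mul_pos (by linarith) (slsQuartic_pos x)), slsQuartic]
  nlinarith [pow_pos (by linarith : (0:ℝ) < x) 3, sq_nonneg (x - 6),
    mul_nonneg (sub_nonneg.2 hx) (sq_nonneg x)]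

lemma le_slsEfficiency_natCast {M : ℕ} (hM : 2 ≤ M) : 36 / 37 ≤ slsEfficiency M := by
  rcases lt_or_ge M 6 with hM6 | hM6
  · interval_cases M <;> norm_num [slsEfficiency, slsQuartic]
  · exact le_slsEfficiency_of_six_le (by exact_mod_cast hM6)

lemma tendsto_slsEfficiency_atTop : Tendsto slsEfficiency atTop (𝓝 1) := by
  have hgap : Tendsto (fun x => 24 * (x - 2) * (x - 3) / ((x + 1) * slsQuartic x)) atTop (𝓝 0) := by
    have hbound : Tendsto (fun x : ℝ => 24 / x) atTop (𝓝 0) :=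
      tendsto_const_nhds.div_atTop tendsto_id
    refine tendsto_of_tendsto_of_tendsto_of_le_of_le' tendsto_const_nhds hbound ?_ ?_
    · filter_upwards [eventually_ge_atTop 3] with x hx
      have hq := slsQuartic_pos x
      exact div_nonneg (by nlinarith) (by positivity)
    · filter_upwards [eventually_ge_atTop 3] with x hx
      have hq := sq_lt_slsQuartic x
      rw [div_le_div_iff₀ (mul_pos (by linarith) (slsQuartic_pos x)) (by linarith)]
      nlinarith
  have hlim := hgap.const_sub 1
  rw [sub_zero] at hlim
  refine hlim.congr' ?_
  filter_upwards [eventually_ge_atTop 0] with x hx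
  exact (slsEfficiency_eq_one_sub (by linarith)).symm

/-- Asymptotic efficiency statement of Theorem 6 of the paper: the efficiency
`η_SLS(M)` of SLS-based 1-D Standard ESPRIT for a single source (CRB divided by the
SLS MSE) simplifies to the two stated rational forms, equals 1 for `M = 2, 3`, is at
least `36/37` for all `M ≥ 2` with equality at `M = 5`, and tends to 1 as `M → ∞`. -/
theorem sls_esprit_asymptotic_efficiency
    (η : ℕ → ℝ)
    (hη : ∀ M, 2 ≤ M →
      η M = (6 / ((M : ℝ) * ((M : ℝ) ^ 2 - 1))) /
        (6 * ((M : ℝ) ^ 4 - 2 * (M : ℝ) ^ 3 + 24 * (M : ℝ) ^ 2 - 22 * (M : ℝ) + 23) /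
          ((M : ℝ) * ((M : ℝ) ^ 2 + 11) ^ 2 * ((M : ℝ) - 1) ^ 2))) :
    (∀ M, 2 ≤ M → η M =
      ((M : ℝ) ^ 2 + 11) ^ 2 * ((M : ℝ) - 1) /
        (((M : ℝ) + 1) *
          ((M : ℝ) ^ 4 - 2 * (M : ℝ) ^ 3 + 24 * (M : ℝ) ^ 2 - 22 * (M : ℝ) + 23))) ∧
    (∀ M, 2 ≤ M → η M =
      ((M : ℝ) ^ 5 - (M : ℝ) ^ 4 + 22 * (M : ℝ) ^ 3 - 22 * (M : ℝ) ^ 2 +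
          121 * (M : ℝ) - 121) /
        ((M : ℝ) ^ 5 - (M : ℝ) ^ 4 + 22 * (M : ℝ) ^ 3 + 2 * (M : ℝ) ^ 2 +
          (M : ℝ) + 23)) ∧
    η 2 = 1 ∧ η 3 = 1 ∧
    (∀ M, 2 ≤ M → 36 / 37 ≤ η M) ∧ η 5 = 36 / 37 ∧
    Tendsto η atTop (nhds 1) := by
  have hηeff : ∀ M, 2 ≤ M → η M = slsEfficiency M := fun M hM => by
    rw [hη M hM]; exact crb_div_mse_eq_slsEfficiency (by positivity)
  refine ⟨fun M hM => hηeff M hM,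
    fun M hM => by rw [hηeff M hM, slsEfficiency_eq_expanded],
    by rw [hηeff 2 le_rfl]; exact_mod_cast slsEfficiency_two,
    by rw [hηeff 3 (by norm_num)]; exact_mod_cast slsEfficiency_three,
    fun M hM => hηeff M hM ▸ le_slsEfficiency_natCast hM,
    by rw [hηeff 5 (by norm_num)]; exact_mod_cast slsEfficiency_five, ?_⟩
  refine (tendsto_slsEfficiency_atTop.comp tendsto_natCast_atTop_atTop).congr' ?_
  filter_upwards [eventually_ge_atTop 2] with M hM
  exact (hηeff M hM).symm
end

section
/- Let M₁, M₂ ∈ ℕ with M₁, M₂ ≥ 2, set M := M₁·M₂, and let μ₁, μ₂ ∈ ℝ. For r = 1, 2 let a⁽ʳ⁾ ∈ ℂ^{M_r} be the ULA steering vector with entries a⁽ʳ⁾_m = exp(i·m·μ_r) (m = 0,…,M_r−1), let a := a⁽¹⁾ ⊗ a⁽²⁾, let J₁⁽ʳ⁾, J₂⁽ʳ⁾ ∈ ℂ^{(M_r−1)×M_r} be the maximum-overlap selection matrices ((J₁⁽ʳ⁾)_{k,m} = 1 iff m = k, (J₂⁽ʳ⁾)_{k,m} = 1 iff m = k+1),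 and define J̃_ℓ⁽¹⁾ := J_ℓ⁽¹⁾ ⊗ I_{M₂}, J̃_ℓ⁽²⁾ := I_{M₁} ⊗ J_ℓ⁽²⁾ (ℓ = 1, 2). Let P_r := (1/M_r)·a⁽ʳ⁾·(a⁽ʳ⁾)ᴴ be the orthogonal projector onto the span of a⁽ʳ⁾. Then for r = 1 and r = 2, the row vector b⁽ʳ⁾ := aᴴ·(J̃₁⁽ʳ⁾)ᴴ·(e^{−iμ_r}·J̃₂⁽ʳ⁾ − J̃₁⁽ʳ⁾) satisfies b⁽ʳ⁾·(I_M − (1/M)·a·aᴴ) = b⁽ʳ⁾·( (I_{M₁} − P₁) ⊗ P₂ + P₁ ⊗ (I_{M₂} − P₂) ). -/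
/-!
Writing `a = a⁽¹⁾ ⊗ a⁽²⁾` gives `aaᴴ/M = P₁ ⊗ P₂`, and
`I - P₁ ⊗ P₂ = (I - P₁) ⊗ P₂ + P₁ ⊗ (I - P₂) + (I - P₁) ⊗ (I - P₂)`, so it suffices that `b⁽ʳ⁾`
annihilates `(I - P₁) ⊗ (I - P₂)`. The selection matrices of direction `r` act on the `r`-th factor
only, hence `b⁽ʳ⁾ = u ⊗ (a⁽ˢ⁾)ᴴ` for the other direction `s`, and `(a⁽ˢ⁾)ᴴ (I - P_s) = 0` because
the unimodular entries give `(a⁽ˢ⁾)ᴴ a⁽ˢ⁾ = M_s`.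
-/

open Matrix Kronecker

namespace Matrix

variable {R l m n p : Type*}

theorem sub_kronecker [Ring R] (A₁ A₂ : Matrix l m R) (B : Matrix n p R) :
    (A₁ - A₂) ⊗ₖ B = A₁ ⊗ₖ B - A₂ ⊗ₖ B := by
  ext; simp [sub_mul]

theorem kronecker_sub [Ring R] (A : Matrix l m R) (B₁ B₂ : Matrix n p R) :
    A ⊗ₖ (B₁ - B₂) = A ⊗ₖ B₁ - A ⊗ₖ B₂ := by
  ext; simp [mul_sub]

theorem one_sub_kronecker_eq [CommRing R] [DecidableEq m] [DecidableEq n]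
    (A : Matrix m m R) (B : Matrix n n R) :
    1 - A ⊗ₖ B = (1 - A) ⊗ₖ B + A ⊗ₖ (1 - B) + (1 - A) ⊗ₖ (1 - B) := by
  rw [← one_kronecker_one]
  ext
  simp only [sub_apply, add_apply, kroneckerMap_apply]
  ring

def vecKron [Mul R] (u : m → R) (v : n → R) : m × n → R := fun x => u x.1 * v x.2

@[simp]
theorem vecKron_apply [Mul R] (u : m → R) (v : n → R) (x : m × n) :
    vecKron u v x = u x.1 * v x.2 := rfl

@[simp]
theorem vecKron_zero_left [MulZeroClass R] (v : n → R) : vecKron (0 : m → R) v = 0 := by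
  ext; simp

@[simp]
theorem vecKron_zero_right [MulZeroClass R] (u : m → R) : vecKron u (0 : n → R) = 0 := by
  ext; simp

theorem star_vecKron [CommSemiring R] [StarRing R] (u : m → R) (v : n → R) :
    star (vecKron u v) = vecKron (star u) (star v) := by
  ext; simp

theorem vecKron_vecMul_kronecker [CommSemiring R] [Fintype m] [Fintype n]
    (u : m → R) (v : n → R) (A : Matrix m l R) (B : Matrix n p R) :
    vecKron u v ᵥ* (A ⊗ₖ B) = vecKron (u ᵥ* A) (v ᵥ* B) := by
  ext
  simp only [vecMul, dotProduct, vecKron_apply, kroneckerMap_apply, Fintype.sum_prod_type,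
    Finset.sum_mul_sum]
  exact Finset.sum_congr rfl fun _ _ => Finset.sum_congr rfl fun _ _ => by ring

theorem kronecker_mulVec_vecKron [CommSemiring R] [Fintype m] [Fintype n]
    (A : Matrix l m R) (B : Matrix p n R) (u : m → R) (v : n → R) :
    (A ⊗ₖ B) *ᵥ vecKron u v = vecKron (A *ᵥ u) (B *ᵥ v) := by
  ext
  simp only [mulVec, dotProduct, vecKron_apply, kroneckerMap_apply, Fintype.sum_prod_type,
    Finset.sum_mul_sum]
  exact Finset.sum_congr rfl fun _ _ => Finset.sum_congr rfl fun _ _ => by ring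

theorem vecMulVec_vecKron [CommSemiring R] (u : m → R) (v : n → R) (u' : l → R) (v' : p → R) :
    vecMulVec (vecKron u v) (vecKron u' v') = vecMulVec u u' ⊗ₖ vecMulVec v v' := by
  ext
  simp only [vecMulVec_apply, vecKron_apply, kroneckerMap_apply]
  ring

theorem vecMul_one_sub_kronecker_of_vecMul_eq_zero [CommRing R] [Fintype m] [Fintype n]
    [DecidableEq m] [DecidableEq n] {A : Matrix m m R} {B : Matrix n n R} {b : m × n → R}
    (hb : b ᵥ* ((1 - A) ⊗ₖ (1 - B)) = 0) :
    b ᵥ* (1 - A ⊗ₖ B) = b ᵥ* ((1 - A) ⊗ₖ B + A ⊗ₖ (1 - B)) := by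
  rw [one_sub_kronecker_eq, vecMul_add, hb, add_zero]

theorem star_vecMul_one_sub_projector {K ι : Type*} [Field K] [StarRing K] [CharZero K]
    [Fintype ι] [DecidableEq ι] (v : ι → K) (hv : ∀ i, star (v i) * v i = 1) :
    star v ᵥ* (1 - (Fintype.card ι : K)⁻¹ • vecMulVec v (star v)) = 0 := by
  have hnorm : star v ⬝ᵥ v = Fintype.card ι := by simp [dotProduct, hv]
  rcases isEmpty_or_nonempty ι with hι | hι
  · exact Subsingleton.elim _ _
  · rw [vecMul_sub, vecMul_one, vecMul_smul, vecMul_vecMulVec, hnorm, smul_smul,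
      inv_mul_cancel₀ (Nat.cast_ne_zero.mpr Fintype.card_ne_zero), one_smul, sub_self]

end Matrix

theorem Complex.star_exp_mul_I_mul_self (t : ℝ) :
    star (Complex.exp (Complex.I * t)) * Complex.exp (Complex.I * t) = 1 := by
  rw [mul_comm Complex.I, Complex.star_def, Complex.conj_mul', Complex.norm_exp_ofReal_mul_I]
  norm_num

theorem tensor_vs_matrix_projector_identity_general
    (M₁ M₂ : ℕ) (μ₁ μ₂ : ℝ)
    (a1 : Fin M₁ → ℂ) (a2 : Fin M₂ → ℂ)
    (ha1 : ∀ m, a1 m = Complex.exp (Complex.I * ((m : ℕ) : ℂ) * (μ₁ : ℂ)))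
    (ha2 : ∀ m, a2 m = Complex.exp (Complex.I * ((m : ℕ) : ℂ) * (μ₂ : ℂ)))
    (a : Fin M₁ × Fin M₂ → ℂ) (ha : ∀ m, a m = a1 m.1 * a2 m.2)
    (J11 J21 : Matrix (Fin (M₁ - 1)) (Fin M₁) ℂ)
    (J12 J22 : Matrix (Fin (M₂ - 1)) (Fin M₂) ℂ)
    (P1 : Matrix (Fin M₁) (Fin M₁) ℂ) (hP1 : P1 = ((M₁ : ℂ))⁻¹ • vecMulVec a1 (star a1))
    (P2 : Matrix (Fin M₂) (Fin M₂) ℂ) (hP2 : P2 = ((M₂ : ℂ))⁻¹ • vecMulVec a2 (star a2))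
    (b1 : Fin M₁ × Fin M₂ → ℂ)
    (hb1 : b1 = star ((J11 ⊗ₖ (1 : Matrix (Fin M₂) (Fin M₂) ℂ)) *ᵥ a) ᵥ*
      (Complex.exp (-(Complex.I * (μ₁ : ℂ))) • (J21 ⊗ₖ (1 : Matrix (Fin M₂) (Fin M₂) ℂ)) -
        J11 ⊗ₖ (1 : Matrix (Fin M₂) (Fin M₂) ℂ)))
    (b2 : Fin M₁ × Fin M₂ → ℂ)
    (hb2 : b2 = star (((1 : Matrix (Fin M₁) (Fin M₁) ℂ) ⊗ₖ J12) *ᵥ a) ᵥ*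
      (Complex.exp (-(Complex.I * (μ₂ : ℂ))) • ((1 : Matrix (Fin M₁) (Fin M₁) ℂ) ⊗ₖ J22) -
        (1 : Matrix (Fin M₁) (Fin M₁) ℂ) ⊗ₖ J12)) :
    (b1 ᵥ* ((1 : Matrix (Fin M₁ × Fin M₂) (Fin M₁ × Fin M₂) ℂ) -
        (((M₁ : ℕ) * M₂ : ℕ) : ℂ)⁻¹ • vecMulVec a (star a)) =
      b1 ᵥ* (((1 : Matrix (Fin M₁) (Fin M₁) ℂ) - P1) ⊗ₖ P2 +
        P1 ⊗ₖ ((1 : Matrix (Fin M₂) (Fin M₂) ℂ) - P2))) ∧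
    (b2 ᵥ* ((1 : Matrix (Fin M₁ × Fin M₂) (Fin M₁ × Fin M₂) ℂ) -
        (((M₁ : ℕ) * M₂ : ℕ) : ℂ)⁻¹ • vecMulVec a (star a)) =
      b2 ᵥ* (((1 : Matrix (Fin M₁) (Fin M₁) ℂ) - P1) ⊗ₖ P2 +
        P1 ⊗ₖ ((1 : Matrix (Fin M₂) (Fin M₂) ℂ) - P2))) := by
  have ha' : a = vecKron a1 a2 := funext ha
  have hann1 : star a1 ᵥ* (1 - P1) = 0 := by
    simpa [hP1] using star_vecMul_one_sub_projector a1 fun m => by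
      simpa [ha1, mul_assoc] using Complex.star_exp_mul_I_mul_self (m * μ₁)
  have hann2 : star a2 ᵥ* (1 - P2) = 0 := by
    simpa [hP2] using star_vecMul_one_sub_projector a2 fun m => by
      simpa [ha2, mul_assoc] using Complex.star_exp_mul_I_mul_self (m * μ₂)
  have hP : (((M₁ * M₂ : ℕ) : ℂ))⁻¹ • vecMulVec a (star a) = P1 ⊗ₖ P2 := by
    rw [hP1, hP2, smul_kronecker, kronecker_smul, smul_smul, ha', star_vecKron, vecMulVec_vecKron,
      Nat.cast_mul, mul_inv, mul_comm]
  have hb1' : b1 = vecKron (star (J11 *ᵥ a1) ᵥ* (Complex.exp (-(Complex.I * μ₁)) • J21 - J11))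
      (star a2) := by
    rw [hb1, ha', ← smul_kronecker, ← sub_kronecker, kronecker_mulVec_vecKron, one_mulVec,
      star_vecKron, vecKron_vecMul_kronecker, vecMul_one]
  have hb2' : b2 = vecKron (star a1)
      (star (J12 *ᵥ a2) ᵥ* (Complex.exp (-(Complex.I * μ₂)) • J22 - J12)) := by
    rw [hb2, ha', ← kronecker_smul, ← kronecker_sub, kronecker_mulVec_vecKron, one_mulVec,
      star_vecKron, vecKron_vecMul_kronecker, vecMul_one]
  rw [hP]
  constructor <;> apply vecMul_one_sub_kronecker_of_vecMul_eq_zero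
  · rw [hb1', vecKron_vecMul_kronecker, hann2, vecKron_zero_right]
  · rw [hb2', vecKron_vecMul_kronecker, hann1, vecKron_zero_left]

/-- Key identity of Appendix H of the paper (Theorem 7): for a single source the row
vector `b⁽ʳ⁾ = aᴴ(J̃₁⁽ʳ⁾)ᴴ(e^{−iμ_r}J̃₂⁽ʳ⁾ − J̃₁⁽ʳ⁾)` is unchanged when the projector
`I − aaᴴ/M` of the matrix-based MSE expression is replaced by the tensor-structured
projector `(I−P₁)⊗P₂ + P₁⊗(I−P₂)` of the tensor-based MSE expression. -/
theorem tensor_vs_matrix_projector_identity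
    (M₁ M₂ : ℕ) (h1 : 2 ≤ M₁) (h2 : 2 ≤ M₂) (μ₁ μ₂ : ℝ)
    (a1 : Fin M₁ → ℂ) (a2 : Fin M₂ → ℂ)
    (ha1 : ∀ m, a1 m = Complex.exp (Complex.I * ((m : ℕ) : ℂ) * (μ₁ : ℂ)))
    (ha2 : ∀ m, a2 m = Complex.exp (Complex.I * ((m : ℕ) : ℂ) * (μ₂ : ℂ)))
    (a : Fin M₁ × Fin M₂ → ℂ) (ha : ∀ m, a m = a1 m.1 * a2 m.2)
    (J11 J21 : Matrix (Fin (M₁ - 1)) (Fin M₁) ℂ)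
    (hJ11 : ∀ k m, J11 k m = if (m : ℕ) = (k : ℕ) then 1 else 0)
    (hJ21 : ∀ k m, J21 k m = if (m : ℕ) = (k : ℕ) + 1 then 1 else 0)
    (J12 J22 : Matrix (Fin (M₂ - 1)) (Fin M₂) ℂ)
    (hJ12 : ∀ k m, J12 k m = if (m : ℕ) = (k : ℕ) then 1 else 0)
    (hJ22 : ∀ k m, J22 k m = if (m : ℕ) = (k : ℕ) + 1 then 1 else 0)
    (P1 : Matrix (Fin M₁) (Fin M₁) ℂ) (hP1 : P1 = ((M₁ : ℂ))⁻¹ • vecMulVec a1 (star a1))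
    (P2 : Matrix (Fin M₂) (Fin M₂) ℂ) (hP2 : P2 = ((M₂ : ℂ))⁻¹ • vecMulVec a2 (star a2))
    (b1 : Fin M₁ × Fin M₂ → ℂ)
    (hb1 : b1 = star ((J11 ⊗ₖ (1 : Matrix (Fin M₂) (Fin M₂) ℂ)) *ᵥ a) ᵥ*
      (Complex.exp (-(Complex.I * (μ₁ : ℂ))) • (J21 ⊗ₖ (1 : Matrix (Fin M₂) (Fin M₂) ℂ)) -
        J11 ⊗ₖ (1 : Matrix (Fin M₂) (Fin M₂) ℂ)))
    (b2 : Fin M₁ × Fin M₂ → ℂ)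
    (hb2 : b2 = star (((1 : Matrix (Fin M₁) (Fin M₁) ℂ) ⊗ₖ J12) *ᵥ a) ᵥ*
      (Complex.exp (-(Complex.I * (μ₂ : ℂ))) • ((1 : Matrix (Fin M₁) (Fin M₁) ℂ) ⊗ₖ J22) -
        (1 : Matrix (Fin M₁) (Fin M₁) ℂ) ⊗ₖ J12)) :
    (b1 ᵥ* ((1 : Matrix (Fin M₁ × Fin M₂) (Fin M₁ × Fin M₂) ℂ) -
        (((M₁ : ℕ) * M₂ : ℕ) : ℂ)⁻¹ • vecMulVec a (star a)) =
      b1 ᵥ* (((1 : Matrix (Fin M₁) (Fin M₁) ℂ) - P1) ⊗ₖ P2 +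
        P1 ⊗ₖ ((1 : Matrix (Fin M₂) (Fin M₂) ℂ) - P2))) ∧
    (b2 ᵥ* ((1 : Matrix (Fin M₁ × Fin M₂) (Fin M₁ × Fin M₂) ℂ) -
        (((M₁ : ℕ) * M₂ : ℕ) : ℂ)⁻¹ • vecMulVec a (star a)) =
      b2 ᵥ* (((1 : Matrix (Fin M₁) (Fin M₁) ℂ) - P1) ⊗ₖ P2 +
        P1 ⊗ₖ ((1 : Matrix (Fin M₂) (Fin M₂) ℂ) - P2))) :=
  tensor_vs_matrix_projector_identity_general M₁ M₂ μ₁ μ₂ a1 a2 ha1 ha2 a ha J11 J21 J12 J22 P1 hP1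
    P2 hP2 b1 hb1 b2 hb2
end

section
/- Let M ∈ ℕ with M ≥ 2 and μ ∈ ℝ. Let a ∈ ℂ^M be the ULA steering vector with entries a_m = exp(i·m·μ) for m = 0,…,M−1, let J₁, J₂ ∈ ℂ^{(M−1)×M} be the maximum-overlap selection matrices with (J₁)_{k,m} = 1 if m = k and 0 otherwise, and (J₂)_{k,m} = 1 if m = k+1 and 0 otherwise, and define ãᵀ := (√M/(M−1)) · (J₁·a)ᴴ · (e^{−iμ}·J₂ − J₁) · (I_M − (1/M)·a·aᴴ). Let Π_M ∈ ℂ^{M×M} be the exchange matrix with entries (Π_M)_{i,j} = 1 if i + j = M − 1 and 0 otherwise. Then ãᵀ·Π_M·ã = −(2M/(M−1)²)·e^{−i(M−1)μ}. -/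
open Matrix BigOperators

/-- Key identity of Appendix E.2 of the paper (Theorem 5, Unitary ESPRIT part): the
single-source ESPRIT error vector `ã` satisfies
`ãᵀ Π_M ã = −(2M/(M−1)²) e^{−i(M−1)μ}`. -/
theorem single_source_exchange_quadratic_form
    (M : ℕ) (hM : 2 ≤ M) (μ : ℝ)
    (a : Fin M → ℂ)
    (ha : ∀ m, a m = Complex.exp (Complex.I * ((m : ℕ) : ℂ) * (μ : ℂ)))
    (J1 J2 : Matrix (Fin (M - 1)) (Fin M) ℂ)
    (hJ1 : ∀ k m, J1 k m = if (m : ℕ) = (k : ℕ) then 1 else 0)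
    (hJ2 : ∀ k m, J2 k m = if (m : ℕ) = (k : ℕ) + 1 then 1 else 0)
    (atilde : Fin M → ℂ)
    (hat : atilde = ((Real.sqrt M / ((M : ℝ) - 1) : ℝ) : ℂ) •
      (star (J1 *ᵥ a) ᵥ*
        ((Complex.exp (-(Complex.I * (μ : ℂ))) • J2 - J1) *
          ((1 : Matrix (Fin M) (Fin M) ℂ) - ((M : ℂ))⁻¹ • vecMulVec a (star a)))))
    (Pex : Matrix (Fin M) (Fin M) ℂ)
    (hPex : ∀ i j, Pex i j = if (i : ℕ) + (j : ℕ) = M - 1 then 1 else 0) :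
    (atilde ᵥ* Pex) ⬝ᵥ atilde =
      -(((2 * (M : ℝ) / ((M : ℝ) - 1) ^ 2 : ℝ)) : ℂ) *
        Complex.exp (-(Complex.I * (((M : ℝ) - 1 : ℝ) : ℂ) * (μ : ℂ))) := by
  have hM1 : 1 ≤ M := by omega
  set E : ℂ := Complex.exp (-(Complex.I * (((M : ℝ) - 1 : ℝ) : ℂ) * (μ : ℂ))) with hEdef
  set c : ℂ := ((Real.sqrt M / ((M : ℝ) - 1) : ℝ) : ℂ) with hcdef
  set e1 : ℂ := Complex.exp (-(Complex.I * (μ : ℂ))) with he1def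
  -- conjugates of steering vector entries
  have ha' : ∀ m : Fin M, (starRingEnd ℂ) (a m)
      = Complex.exp (-(Complex.I * ((m : ℕ) : ℂ) * (μ : ℂ))) := by
    intro m
    rw [ha, ← Complex.exp_conj]
    congr 1
    simp only [_root_.map_mul, Complex.conj_I, Complex.conj_natCast, Complex.conj_ofReal]
    ring
  -- the target two-spike vector
  set w0 : Fin M → ℂ := fun m => if (m : ℕ) = 0 then -1 else if (m : ℕ) = M - 1 then E else 0
    with hw0def
  have hJ1a : ∀ k : Fin (M - 1), (J1 *ᵥ a) k = a ⟨(k : ℕ), by omega⟩ := by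
    intro k
    simp only [mulVec, dotProduct, hJ1]
    rw [Finset.sum_eq_single (⟨(k : ℕ), by omega⟩ : Fin M)]
    · simp
    · intro b _ hb
      rw [if_neg, zero_mul]
      intro h
      exact hb (Fin.ext (by simp only [Fin.val_mk]; omega))
    · intro h
      exact absurd (Finset.mem_univ _) h
  -- Step 1 : the row vector before projection
  have hw : ∀ m : Fin M, (star (J1 *ᵥ a) ᵥ* (e1 • J2 - J1)) m = w0 m := by
    intro m
    have hstep : (star (J1 *ᵥ a) ᵥ* (e1 • J2 - J1)) m
        = (∑ k : Fin (M - 1), if (m : ℕ) = (k : ℕ) + 1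
              then (starRingEnd ℂ) (a ⟨(k : ℕ), by omega⟩) * e1 else 0)
          - ∑ k : Fin (M - 1), if (m : ℕ) = (k : ℕ)
              then (starRingEnd ℂ) (a ⟨(k : ℕ), by omega⟩) else 0 := by
      rw [← Finset.sum_sub_distrib]
      simp only [vecMul, dotProduct, Matrix.sub_apply, Matrix.smul_apply, Pi.star_apply,
        hJ1a, hJ2, hJ1, smul_eq_mul, Complex.star_def]
      refine Finset.sum_congr rfl fun k _ => ?_
      split_ifs <;> ring
    rw [hstep]
    rcases Nat.eq_zero_or_pos (m : ℕ) with hm0 | hmpos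
    · -- m = 0 : only the J1 sum contributes, with k = 0
      have h1 : (∑ k : Fin (M - 1), if (m : ℕ) = (k : ℕ) + 1
          then (starRingEnd ℂ) (a ⟨(k : ℕ), by omega⟩) * e1 else 0) = 0 :=
        Finset.sum_eq_zero fun k _ => by rw [if_neg]; omega
      have h2 : (∑ k : Fin (M - 1), if (m : ℕ) = (k : ℕ)
          then (starRingEnd ℂ) (a ⟨(k : ℕ), by omega⟩) else 0)
          = (starRingEnd ℂ) (a ⟨0, by omega⟩) := by
        rw [Finset.sum_eq_single (⟨0, by omega⟩ : Fin (M - 1))]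
        · rw [if_pos (by simp only [Fin.val_mk]; omega)]
        · intro b _ hb
          rw [if_neg]
          intro h
          exact hb (Fin.ext (by simp only [Fin.val_mk]; omega))
        · intro h
          exact absurd (Finset.mem_univ _) h
      rw [h1, h2, ha', hw0def]
      simp [hm0]
    · rcases eq_or_ne (m : ℕ) (M - 1) with hmtop | hmid
      · -- m = M-1 : only the J2 sum contributes, with k = M-2
        have h1 : (∑ k : Fin (M - 1), if (m : ℕ) = (k : ℕ) + 1
            then (starRingEnd ℂ) (a ⟨(k : ℕ), by omega⟩) * e1 else 0)
            = (starRingEnd ℂ) (a ⟨M - 2, by omega⟩) * e1 := by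
          rw [Finset.sum_eq_single (⟨M - 2, by omega⟩ : Fin (M - 1))]
          · rw [if_pos (by simp only [Fin.val_mk]; omega)]
          · intro b _ hb
            rw [if_neg]
            intro h
            exact hb (Fin.ext (by simp only [Fin.val_mk]; omega))
          · intro h
            exact absurd (Finset.mem_univ _) h
        have h2 : (∑ k : Fin (M - 1), if (m : ℕ) = (k : ℕ)
            then (starRingEnd ℂ) (a ⟨(k : ℕ), by omega⟩) else 0) = 0 :=
          Finset.sum_eq_zero fun k _ => by
            rw [if_neg]
            have := k.isLt
            omega
        rw [h1, h2, ha', hw0def, he1def, ← Complex.exp_add, hEdef]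
        have hcast : ((M - 2 : ℕ) : ℂ) = (M : ℂ) - 2 := by
          push_cast [Nat.cast_sub hM]; ring
        simp only [Fin.val_mk, hcast]
        rw [if_neg (by omega), if_pos hmtop]
        push_cast
        ring_nf
      · -- middle : both sums contribute and cancel
        have h1 : (∑ k : Fin (M - 1), if (m : ℕ) = (k : ℕ) + 1
            then (starRingEnd ℂ) (a ⟨(k : ℕ), by omega⟩) * e1 else 0)
            = (starRingEnd ℂ) (a ⟨(m : ℕ) - 1, by omega⟩) * e1 := by
          rw [Finset.sum_eq_single (⟨(m : ℕ) - 1, by omega⟩ : Fin (M - 1))]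
          · rw [if_pos (by simp only [Fin.val_mk]; omega)]
          · intro b _ hb
            rw [if_neg]
            intro h
            exact hb (Fin.ext (by simp only [Fin.val_mk]; omega))
          · intro h
            exact absurd (Finset.mem_univ _) h
        have h2 : (∑ k : Fin (M - 1), if (m : ℕ) = (k : ℕ)
            then (starRingEnd ℂ) (a ⟨(k : ℕ), by omega⟩) else 0)
            = (starRingEnd ℂ) (a ⟨(m : ℕ), by omega⟩) := by
          have hlt : (m : ℕ) < M - 1 := by
            have := m.isLt; omega
          rw [Finset.sum_eq_single (⟨(m : ℕ), hlt⟩ : Fin (M - 1))]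
          · rw [if_pos (by simp only [Fin.val_mk])]
          · intro b _ hb
            rw [if_neg]
            intro h
            exact hb (Fin.ext (by simp only [Fin.val_mk]; omega))
          · intro h
            exact absurd (Finset.mem_univ _) h
        rw [h1, h2, ha', ha', he1def, ← Complex.exp_add, hw0def]
        have hcast : (((m : ℕ) - 1 : ℕ) : ℂ) = ((m : ℕ) : ℂ) - 1 := by
          push_cast [Nat.cast_sub hmpos]; ring
        simp only [Fin.val_mk, hcast]
        rw [if_neg (by omega), if_neg hmid, sub_eq_zero]
        congr 1
        ring
  have hwfun : (star (J1 *ᵥ a) ᵥ* (e1 • J2 - J1)) = w0 := funext hw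
  -- values of w0
  have hw0zero : ∀ m : Fin M, (m : ℕ) ≠ 0 → (m : ℕ) ≠ M - 1 → w0 m = 0 := by
    intro m h0 h1
    simp only [hw0def]
    rw [if_neg h0, if_neg h1]
  have hw0a : w0 (⟨0, by omega⟩ : Fin M) = -1 := by
    show (if (0 : ℕ) = 0 then (-1 : ℂ) else if (0 : ℕ) = M - 1 then E else 0) = -1
    rw [if_pos rfl]
  have hw0b : w0 (⟨M - 1, by omega⟩ : Fin M) = E := by
    show (if (M - 1 : ℕ) = 0 then (-1 : ℂ) else if (M - 1 : ℕ) = M - 1 then E else 0) = E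
    rw [if_neg (by omega), if_pos rfl]
  -- Step 2 : w0 ⬝ᵥ a = 0
  have hdot : ∑ i : Fin M, w0 i * a i = 0 := by
    rw [Finset.sum_eq_add_of_mem (⟨0, by omega⟩ : Fin M) (⟨M - 1, by omega⟩ : Fin M)
      (Finset.mem_univ _) (Finset.mem_univ _)
      (by intro h; have := congrArg Fin.val h; simp only [Fin.val_mk] at this; omega) ?_]
    · rw [hw0a, hw0b, ha, ha, hEdef, ← Complex.exp_add]
      have hcast : ((M - 1 : ℕ) : ℂ) = (M : ℂ) - 1 := by
        push_cast [Nat.cast_sub hM1]; ring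
      simp only [Fin.val_mk, Nat.cast_zero, hcast]
      have harg : -(Complex.I * ((((M : ℝ) - 1 : ℝ)) : ℂ) * (μ : ℂ))
          + Complex.I * ((M : ℂ) - 1) * (μ : ℂ) = 0 := by
        push_cast; ring
      rw [harg, Complex.exp_zero]
      simp
    · intro k _ hk
      obtain ⟨hk0, hk1⟩ := hk
      rw [hw0zero k ?_ ?_, zero_mul]
      · intro h; exact hk0 (Fin.ext (by simp only [Fin.val_mk]; omega))
      · intro h; exact hk1 (Fin.ext (by simp only [Fin.val_mk]; omega))
  -- Step 3 : w0 is invariant under the projection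
  have hwP : w0 ᵥ* ((1 : Matrix (Fin M) (Fin M) ℂ) - ((M : ℂ))⁻¹ • vecMulVec a (star a)) = w0 := by
    funext m
    simp only [vecMul, dotProduct, Matrix.sub_apply, Matrix.smul_apply, Matrix.one_apply,
      vecMulVec_apply, Pi.star_apply, smul_eq_mul, mul_sub, Finset.sum_sub_distrib]
    have hA : (∑ i : Fin M, w0 i * if i = m then 1 else 0) = w0 m := by
      simp only [mul_ite, mul_one, mul_zero]
      simp [Finset.sum_ite_eq']
    have hB : (∑ i : Fin M, w0 i * (((M : ℂ))⁻¹ * (a i * star (a m))))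
        = ((M : ℂ))⁻¹ * star (a m) * ∑ i : Fin M, w0 i * a i := by
      rw [Finset.mul_sum]
      exact Finset.sum_congr rfl fun i _ => by ring
    rw [hA, hB, hdot, mul_zero, sub_zero]
  -- Step 4 : atilde = c • w0
  have hatw : atilde = c • w0 := by
    rw [hat, ← Matrix.vecMul_vecMul, hwfun, hwP]
  have hval0 : atilde (⟨0, by omega⟩ : Fin M) = -c := by
    rw [hatw]; simp [hw0a]
  have hval1 : atilde (⟨M - 1, by omega⟩ : Fin M) = c * E := by
    rw [hatw]; simp [hw0b]
  have hvalz : ∀ m : Fin M, (m : ℕ) ≠ 0 → (m : ℕ) ≠ M - 1 → atilde m = 0 := by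
    intro m h0 h1
    rw [hatw]
    simp [hw0zero m h0 h1]
  -- Step 5 : evaluate the quadratic form
  have hne : (⟨0, by omega⟩ : Fin M) ≠ (⟨M - 1, by omega⟩ : Fin M) := by
    intro h; have := congrArg Fin.val h; simp only [Fin.val_mk] at this; omega
  have hinner : ∀ j : Fin M, (atilde ᵥ* Pex) j
      = atilde (⟨0, by omega⟩ : Fin M) * Pex (⟨0, by omega⟩ : Fin M) j
        + atilde (⟨M - 1, by omega⟩ : Fin M) * Pex (⟨M - 1, by omega⟩ : Fin M) j := by
    intro j
    show (∑ i : Fin M, atilde i * Pex i j) = _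
    rw [Finset.sum_eq_add_of_mem (⟨0, by omega⟩ : Fin M) (⟨M - 1, by omega⟩ : Fin M)
      (Finset.mem_univ _) (Finset.mem_univ _) hne ?_]
    intro k _ hk
    obtain ⟨hk0, hk1⟩ := hk
    rw [hvalz k ?_ ?_, zero_mul]
    · intro h; exact hk0 (Fin.ext (by simp only [Fin.val_mk]; omega))
    · intro h; exact hk1 (Fin.ext (by simp only [Fin.val_mk]; omega))
  have houter : (atilde ᵥ* Pex) ⬝ᵥ atilde
      = (atilde ᵥ* Pex) (⟨0, by omega⟩ : Fin M) * atilde (⟨0, by omega⟩ : Fin M)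
        + (atilde ᵥ* Pex) (⟨M - 1, by omega⟩ : Fin M) * atilde (⟨M - 1, by omega⟩ : Fin M) := by
    show (∑ j : Fin M, (atilde ᵥ* Pex) j * atilde j) = _
    rw [Finset.sum_eq_add_of_mem (⟨0, by omega⟩ : Fin M) (⟨M - 1, by omega⟩ : Fin M)
      (Finset.mem_univ _) (Finset.mem_univ _) hne ?_]
    intro k _ hk
    obtain ⟨hk0, hk1⟩ := hk
    rw [hvalz k ?_ ?_, mul_zero]
    · intro h; exact hk0 (Fin.ext (by simp only [Fin.val_mk]; omega))
    · intro h; exact hk1 (Fin.ext (by simp only [Fin.val_mk]; omega))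
  -- the four Pex entries
  have hP00 : Pex (⟨0, by omega⟩ : Fin M) (⟨0, by omega⟩ : Fin M) = 0 := by
    rw [hPex]; rw [if_neg]; simp only [Fin.val_mk]; omega
  have hP01 : Pex (⟨0, by omega⟩ : Fin M) (⟨M - 1, by omega⟩ : Fin M) = 1 := by
    rw [hPex]; rw [if_pos]; simp only [Fin.val_mk]; omega
  have hP10 : Pex (⟨M - 1, by omega⟩ : Fin M) (⟨0, by omega⟩ : Fin M) = 1 := by
    rw [hPex]; rw [if_pos]; simp only [Fin.val_mk]; omega
  have hP11 : Pex (⟨M - 1, by omega⟩ : Fin M) (⟨M - 1, by omega⟩ : Fin M) = 0 := by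
    rw [hPex]; rw [if_neg]; simp only [Fin.val_mk]; omega
  rw [houter, hinner, hinner, hP00, hP01, hP10, hP11, hval0, hval1]
  -- final arithmetic
  have hc2 : c ^ 2 = (((M : ℝ) / ((M : ℝ) - 1) ^ 2 : ℝ) : ℂ) := by
    rw [hcdef]
    rw [← Complex.ofReal_pow]
    congr 1
    rw [div_pow, Real.sq_sqrt (by positivity)]
  have : (-c * 0 + c * E * 1) * -c + (-c * 1 + c * E * 0) * (c * E) = -2 * c ^ 2 * E := by
    ring
  rw [this, hc2]
  push_cast
  ring
end
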